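/- arXiv:1407.4951 — 9 statements merged into one kernel-verified Lean document; each statement's English description precedes it below -/
import Mathlib

section
/- Let A be an n × n real symmetric matrix (n ≥ 1) whose off-diagonal entries are all nonnegative (A_{ij} ≥ 0 for all i ≠ j). Then there exists a nonzero eigenvector v of A associated to the largest eigenvalue of A all of whose coordinates are nonnegative (v_i ≥ 0 for all i). -/
/-!
Let `λ` be the largest eigenvalue of `A`, so that `λ • 1 - A` is positive semidefinite, i.e.
`xᵀ A x ≤ λ xᵀ x` for all `x`. For an eigenvector `w` of `λ`, the nonnegative off-diagonal
entries give `wᵀ A w ≤ |w|ᵀ A |w|`, so `|w|` also attains this Rayleigh bound. Then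
`|w|ᵀ (λ • 1 - A) |w| = 0`, and a positive semidefinite form vanishes only on its kernel,
so `|w|` is an eigenvector for `λ`.
-/

open Matrix

section OffDiagNonneg

variable {ι R : Type*} [Fintype ι] [CommRing R] [LinearOrder R] [IsStrictOrderedRing R]

theorem Matrix.dotProduct_mulVec_le_abs_dotProduct_mulVec_abs {A : Matrix ι ι R}
    (hoff : ∀ i j, i ≠ j → 0 ≤ A i j) (w : ι → R) :
    w ⬝ᵥ A *ᵥ w ≤ |w| ⬝ᵥ A *ᵥ |w| := by
  simp only [dotProduct, mulVec, Finset.mul_sum, Pi.abs_apply]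
  refine Finset.sum_le_sum fun i _ => Finset.sum_le_sum fun j _ => ?_
  rw [mul_left_comm, mul_left_comm |w i|]
  rcases eq_or_ne i j with rfl | hij
  · rw [abs_mul_abs_self]
  · exact mul_le_mul_of_nonneg_left ((le_abs_self _).trans (abs_mul _ _).le) (hoff i j hij)

end OffDiagNonneg

section RayleighBound

variable {ι : Type*} [Fintype ι] [DecidableEq ι] {A : Matrix ι ι ℝ} {c : ℝ}

theorem Matrix.dotProduct_smul_one_sub_mulVec (x : ι → ℝ) :
    x ⬝ᵥ (c • 1 - A) *ᵥ x = c * (x ⬝ᵥ x) - x ⬝ᵥ A *ᵥ x := by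
  rw [sub_mulVec, dotProduct_sub, smul_mulVec, one_mulVec, dotProduct_smul, smul_eq_mul]

theorem Matrix.IsHermitian.posSemidef_smul_one_sub (hA : A.IsHermitian)
    (hc : ∀ i, hA.eigenvalues i ≤ c) : (c • 1 - A).PosSemidef := by
  rw [posSemidef_iff_isHermitian_and_spectrum_nonneg]
  refine ⟨(isHermitian_one.smul (.all c)).sub hA, ?_⟩
  rw [← Algebra.algebraMap_eq_smul_one, ← spectrum.singleton_sub_eq,
    hA.spectrum_real_eq_range_eigenvalues]
  rintro _ ⟨_, rfl, _, ⟨i, rfl⟩, rfl⟩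
  exact sub_nonneg.mpr (hc i)

theorem Matrix.PosSemidef.mulVec_eq_smul_of_le_dotProduct_mulVec (hM : (c • 1 - A).PosSemidef)
    {x : ι → ℝ} (hx : c * (x ⬝ᵥ x) ≤ x ⬝ᵥ A *ᵥ x) : A *ᵥ x = c • x := by
  have hzero : star x ⬝ᵥ (c • 1 - A) *ᵥ x = 0 := by
    refine le_antisymm ?_ (hM.dotProduct_mulVec_nonneg x)
    rw [star_trivial, dotProduct_smul_one_sub_mulVec]
    linarith
  have hker := (hM.dotProduct_mulVec_zero_iff x).mp hzero
  rw [sub_mulVec, smul_mulVec, one_mulVec, sub_eq_zero] at hker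
  exact hker.symm

theorem Matrix.PosSemidef.le_of_mulVec_eq_smul (hM : (c • 1 - A).PosSemidef) {μ : ℝ}
    {x : ι → ℝ} (hx : x ≠ 0) (hAx : A *ᵥ x = μ • x) : μ ≤ c := by
  have hpos : 0 < x ⬝ᵥ x := by simpa using dotProduct_star_self_pos_iff.mpr hx
  have hquad := hM.dotProduct_mulVec_nonneg x
  rw [star_trivial, dotProduct_smul_one_sub_mulVec, hAx, dotProduct_smul, smul_eq_mul,
    ← sub_mul] at hquad
  exact sub_nonneg.mp (nonneg_of_mul_nonneg_left hquad hpos)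

end RayleighBound

/-- A real symmetric matrix with nonnegative off-diagonal entries has a nonzero
entrywise-nonnegative eigenvector associated to its largest eigenvalue. -/
theorem largest_eigenvalue_nonneg_eigenvector (n : ℕ) (hn : 1 ≤ n)
    (A : Matrix (Fin n) (Fin n) ℝ) (hsymm : A.IsSymm)
    (hoff : ∀ i j : Fin n, i ≠ j → 0 ≤ A i j) :
    ∃ (lam : ℝ) (v : Fin n → ℝ), v ≠ 0 ∧ (∀ i, 0 ≤ v i) ∧ A.mulVec v = lam • v ∧
      ∀ (μ : ℝ) (w : Fin n → ℝ), w ≠ 0 → A.mulVec w = μ • w → μ ≤ lam := by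
  have hA : A.IsHermitian := isHermitian_iff_isSymm.mpr hsymm
  have : Nonempty (Fin n) := ⟨⟨0, hn⟩⟩
  obtain ⟨i₀, hmax⟩ := Finite.exists_max hA.eigenvalues
  set lam := hA.eigenvalues i₀
  have hM : (lam • 1 - A).PosSemidef := hA.posSemidef_smul_one_sub hmax
  set w : Fin n → ℝ := ⇑(hA.eigenvectorBasis i₀)
  have hw : w ≠ 0 := fun h => hA.eigenvectorBasis.orthonormal.ne_zero i₀ (by ext j; simp [w, h])
  have hAw : A *ᵥ w = lam • w := hA.mulVec_eigenvectorBasis i₀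
  have habs_ne : |w| ≠ 0 := fun h => hw (funext fun i => abs_eq_zero.mp (congrFun h i))
  have habs_attains : lam * (|w| ⬝ᵥ |w|) ≤ |w| ⬝ᵥ A *ᵥ |w| :=
    calc lam * (|w| ⬝ᵥ |w|) = w ⬝ᵥ A *ᵥ w := by
          rw [hAw, dotProduct_smul, smul_eq_mul]
          simp only [dotProduct, Pi.abs_apply, abs_mul_abs_self]
      _ ≤ |w| ⬝ᵥ A *ᵥ |w| := dotProduct_mulVec_le_abs_dotProduct_mulVec_abs hoff w
  exact ⟨lam, |w|, habs_ne, fun i => abs_nonneg (w i),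
    hM.mulVec_eq_smul_of_le_dotProduct_mulVec habs_attains,
    fun μ x hx hAx => hM.le_of_mulVec_eq_smul hx hAx⟩
end

section
/- Let N ≥ 1, d ≥ 2 and 0 ≤ M ≤ N be integers. The matrix G_0^{(M)} is positive definite: for every nonzero real vector β indexed by the Hamming-weight-M bit strings of length N, Σ_{x,z} β_x β_z / C(M + d − 1 − x·z, d − 1) > 0. -/
/-- Hamming weight of a bit string. -/
def wt {N : ℕ} (x : Fin N → Bool) : ℕ := (Finset.univ.filter (fun i => x i = true)).card

/-- Number of positions at which both bit strings are 1. -/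
def dotB {N : ℕ} (x z : Fin N → Bool) : ℕ :=
  (Finset.univ.filter (fun i => x i = true ∧ z i = true)).card

/-- The (x,z) entry of the matrix `G_y^{(M)}`:
`1 / C(M + d − 1 − x·z + |x̄ ∧ z̄ ∧ y|, d − 1)`. -/
noncomputable def gEnt (d M : ℕ) {N : ℕ} (y x z : Fin N → Bool) : ℝ :=
  1 / (Nat.choose (M + d - 1 - dotB x z + wt (fun i => (!x i && !z i && y i))) (d - 1) : ℝ)

/-! The beta integral `∫₀¹ t^m (1 - t)^k dt = 1 / ((k + 1) C(m + k + 1, k + 1))` turns the quadratic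
form into `(d - 1) ∫₀¹ Q(t) (1 - t)^(d - 2) dt` with `Q(t) = ∑ β_x β_z t^(M - x·z)`. For strings of
weight `M` the Hamming distance is `2 (M - x·z)`, so `Q(t)` is the quadratic form of the kernel
`u ^ d_H(x, z)`, `u = √t`, restricted to the weight-`M` strings. That kernel is the `N`-th Kronecker
power of `[[1, u], [u, 1]]`, hence positive definite for `0 ≤ u < 1`, so `Q > 0` on `(0, 1)`. -/

open Matrix Finset
open scoped Kronecker Nat

lemma hammingDist_cons {α : Type*} [DecidableEq α] {N : ℕ} (a b : α) (x z : Fin N → α) :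
    hammingDist (Fin.cons a x : Fin (N + 1) → α) (Fin.cons b z) =
      (if a = b then 0 else 1) + hammingDist x z := by
  simp only [hammingDist, card_filter, Fin.sum_univ_succ, Fin.cons_zero, Fin.cons_succ, ne_eq,
    ite_not]

section HammingKernel

variable {α : Type*} [DecidableEq α]

variable (α) in
def hammingKernel (N : ℕ) (u : ℝ) : Matrix (Fin N → α) (Fin N → α) ℝ :=
  of fun x z ↦ u ^ hammingDist x z

lemma posDef_ite_eq_one_else [Finite α] {u : ℝ} (hu₀ : 0 ≤ u) (hu₁ : u < 1) :
    (of fun a b : α ↦ if a = b then (1 : ℝ) else u).PosDef := by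
  have h : (of fun a b : α ↦ if a = b then (1 : ℝ) else u) =
      (1 - u) • (1 : Matrix α α ℝ) + u • vecMulVec 1 (star 1) := by
    ext a b
    by_cases hab : a = b <;> simp [hab, one_apply, vecMulVec]
  rw [h]
  exact (PosDef.one.smul (sub_pos.mpr hu₁)).add_posSemidef
    ((posSemidef_vecMulVec_self_star 1).smul hu₀)

lemma hammingKernel_succ_submatrix (N : ℕ) (u : ℝ) :
    (hammingKernel α (N + 1) u).submatrix (Fin.consEquiv fun _ ↦ α) (Fin.consEquiv fun _ ↦ α) =
      (of fun a b : α ↦ if a = b then (1 : ℝ) else u) ⊗ₖ hammingKernel α N u := by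
  ext ⟨a, x⟩ ⟨b, z⟩
  by_cases hab : a = b <;> simp [hammingKernel, Fin.consEquiv, hammingDist_cons, hab, pow_add]

theorem posDef_hammingKernel [Finite α] (N : ℕ) {u : ℝ} (hu₀ : 0 ≤ u) (hu₁ : u < 1) :
    (hammingKernel α N u).PosDef := by
  induction N with
  | zero =>
    convert PosDef.one (n := Fin 0 → α) (R := ℝ)
    ext x z
    simp [hammingKernel, one_apply, Subsingleton.elim x z]
  | succ N ih =>
    have h := ((posDef_ite_eq_one_else hu₀ hu₁).kronecker ih).submatrix
      (Fin.consEquiv fun _ ↦ α).symm.injective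
    rwa [← hammingKernel_succ_submatrix, submatrix_submatrix, Equiv.self_comp_symm,
      submatrix_id_id] at h

lemma sum_sum_mul_pow_hammingDist_pos [Finite α] {N : ℕ} {ι : Type*} [Fintype ι]
    {f : ι → Fin N → α} (hf : Function.Injective f) {u : ℝ} (hu₀ : 0 ≤ u) (hu₁ : u < 1)
    {β : ι → ℝ} (hβ : β ≠ 0) :
    0 < ∑ x, ∑ z, β x * β z * u ^ hammingDist (f x) (f z) := by
  have h := ((posDef_hammingKernel N hu₀ hu₁).submatrix hf).dotProduct_mulVec_pos hβ
  simp only [star_trivial, dotProduct, mulVec, submatrix_apply, hammingKernel, of_apply,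
    mul_sum] at h
  exact h.trans_eq (sum_congr rfl fun x _ ↦ sum_congr rfl fun z _ ↦ by ring)

end HammingKernel

theorem integral_pow_mul_one_sub_pow (n k : ℕ) :
    ∫ t in (0 : ℝ)..1, t ^ n * (1 - t) ^ k = ((k + 1) * (n + k + 1).choose (k + 1) : ℝ)⁻¹ := by
  have hre : 0 < ((n : ℂ) + 1).re := by simp; positivity
  have hB := Complex.betaIntegral_eval_nat_add_one_right hre k
  have hint :
      Complex.betaIntegral (n + 1) (k + 1) = ↑(∫ t in (0 : ℝ)..1, t ^ n * (1 - t) ^ k) := by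
    rw [Complex.betaIntegral, ← intervalIntegral.integral_ofReal]
    refine intervalIntegral.integral_congr fun t _ ↦ ?_
    simp [← Complex.cpow_natCast]
  have hprod :
      ∏ j ∈ range (k + 1), ((n : ℂ) + 1 + j) = ((k + 1)! * (n + k + 1).choose (k + 1) : ℕ) := by
    rw [Nat.add_assoc, ← Nat.ascFactorial_eq_factorial_mul_choose, Nat.ascFactorial_eq_prod_range]
    push_cast
    rfl
  rw [hint, hprod] at hB
  apply Complex.ofReal_injective
  rw [hB, Nat.factorial_succ]
  have hk : (k ! : ℂ) ≠ 0 := Nat.cast_ne_zero.mpr k.factorial_ne_zero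
  push_cast
  field_simp

section BitStrings

variable {N : ℕ}

lemma dotB_le_wt (x z : Fin N → Bool) : dotB x z ≤ wt x :=
  card_le_card fun _ ↦ by simp +contextual

lemma hammingDist_add_two_mul_dotB (x z : Fin N → Bool) :
    hammingDist x z + 2 * dotB x z = wt x + wt z := by
  simp only [hammingDist, wt, dotB, card_filter, mul_sum, ← sum_add_distrib]
  exact sum_congr rfl fun i _ ↦ by cases x i <;> cases z i <;> rfl

lemma hammingDist_eq_two_mul_sub_dotB {M : ℕ} {x z : Fin N → Bool} (hx : wt x = M)
    (hz : wt z = M) : hammingDist x z = 2 * (M - dotB x z) := by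
  have := hammingDist_add_two_mul_dotB x z
  have := dotB_le_wt x z
  omega

lemma sum_sum_mul_pow_sub_dotB_pos {M : ℕ} {t : ℝ} (ht₀ : 0 < t) (ht₁ : t < 1)
    {β : {x : Fin N → Bool // wt x = M} → ℝ} (hβ : β ≠ 0) :
    0 < ∑ x, ∑ z, β x * β z * t ^ (M - dotB x.1 z.1) := by
  convert sum_sum_mul_pow_hammingDist_pos Subtype.val_injective (Real.sqrt_nonneg t)
    ((Real.sqrt_lt' one_pos).2 (by rwa [one_pow])) hβ using 4 with x _ z _
  rw [hammingDist_eq_two_mul_sub_dotB x.2 z.2, pow_mul, Real.sq_sqrt ht₀.le]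

end BitStrings

theorem G0_posDef_general (N d M : ℕ) (hd : 2 ≤ d)
    (β : {x : Fin N → Bool // wt x = M} → ℝ) (hβ : β ≠ 0) :
    0 < ∑ x : {x : Fin N → Bool // wt x = M}, ∑ z : {x : Fin N → Bool // wt x = M},
      β x * β z / (Nat.choose (M + d - 1 - dotB x.1 z.1) (d - 1) : ℝ) := by
  obtain ⟨k, rfl⟩ : ∃ k, d = k + 2 := ⟨d - 2, by omega⟩
  set Q : ℝ → ℝ := fun t ↦ ∑ x, ∑ z, β x * β z * t ^ (M - dotB x.1 z.1) with hQ
  have hentry : ∀ x z : {x : Fin N → Bool // wt x = M},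
      β x * β z / ((M + (k + 2) - 1 - dotB x.1 z.1).choose (k + 2 - 1) : ℝ) =
        (k + 1) * ∫ t in (0 : ℝ)..1, β x * β z * t ^ (M - dotB x.1 z.1) * (1 - t) ^ k := by
    intro x z
    have hdot : dotB x.1 z.1 ≤ M := (dotB_le_wt x.1 z.1).trans_eq x.2
    simp_rw [mul_assoc (β x * β z), intervalIntegral.integral_const_mul,
      integral_pow_mul_one_sub_pow,
      show M + (k + 2) - 1 - dotB x.1 z.1 = M - dotB x.1 z.1 + k + 1 by omega]
    field_simp
    push_cast
    ring
  have hQint : ∫ t in (0 : ℝ)..1, Q t * (1 - t) ^ k =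
      ∑ x, ∑ z, ∫ t in (0 : ℝ)..1, β x * β z * t ^ (M - dotB x.1 z.1) * (1 - t) ^ k := by
    simp only [hQ, sum_mul]
    rw [intervalIntegral.integral_finsetSum fun _ _ ↦
      (by fun_prop : Continuous _).intervalIntegrable _ _]
    exact sum_congr rfl fun x _ ↦ intervalIntegral.integral_finsetSum fun _ _ ↦
      (by fun_prop : Continuous _).intervalIntegrable _ _
  calc 0 < (k + 1 : ℝ) * ∫ t in (0 : ℝ)..1, Q t * (1 - t) ^ k :=
        mul_pos (by positivity) (intervalIntegral.intervalIntegral_pos_of_pos_on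
          ((by fun_prop : Continuous fun t ↦ Q t * (1 - t) ^ k).intervalIntegrable _ _)
          (fun t ht ↦ mul_pos (sum_sum_mul_pow_sub_dotB_pos ht.1 ht.2 hβ)
            (pow_pos (sub_pos.2 ht.2) k)) one_pos)
    _ = _ := by simp only [hQint, mul_sum, hentry]

/-- The matrix `G_0^{(M)}` is positive definite. -/
theorem G0_posDef (N d M : ℕ) (hN : 1 ≤ N) (hd : 2 ≤ d) (hM : M ≤ N)
    (β : {x : Fin N → Bool // wt x = M} → ℝ) (hβ : β ≠ 0) :
    0 < ∑ x : {x : Fin N → Bool // wt x = M}, ∑ z : {x : Fin N → Bool // wt x = M},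
      β x * β z / (Nat.choose (M + d - 1 - dotB x.1 z.1) (d - 1) : ℝ) :=
  G0_posDef_general N d M hd β hβ
end

section
/- Let d ≥ 2 and 1 ≤ M < N be integers. Then (1/N) · (C(M+d−1, M)/C(N+d−1, M)) · Σ_{i=0}^{M} C(M, i) · C(N−M, M−i) · Σ_{q=0}^{N+i−2M} C(N+i−2M, q) · C(2M−i, 1−q) / C(M+d−1−i+q, d−1) = M/N + (N−M)(M+1)/(N(M+d)). Here the inner sum over q is empty when N+i−2M < 0, and a binomial coefficient C(a, b) is taken to be 0 unless 0 ≤ b ≤ a. -/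
/-- Binomial coefficient of integers, with the convention that `C(a, b) = 0`
unless `0 ≤ b ≤ a`. -/
def ichoose (a b : ℤ) : ℕ := if 0 ≤ b ∧ b ≤ a then Nat.choose a.toNat b.toNat else 0

open Finset

lemma trin {n m k : ℕ} (hk : k ≤ m) (hm : m ≤ n) :
    n.choose m * m.choose k = n.choose k * (n - k).choose (m - k) := by
  have h2 := Nat.choose_mul_factorial_mul_factorial hk
  have h3 := Nat.choose_mul_factorial_mul_factorial (Nat.sub_le_sub_right hm k)
  have h4 := Nat.choose_mul_factorial_mul_factorial (hk.trans hm)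
  have h1 := Nat.choose_mul_factorial_mul_factorial hm
  have key : n.choose m * m.choose k * (k.factorial * (m - k).factorial * (n - m).factorial)
      = n.choose k * (n - k).choose (m - k) * (k.factorial * (m - k).factorial * (n - m).factorial) := by
    have e1 : (n - k) - (m - k) = n - m := by omega
    calc n.choose m * m.choose k * (k.factorial * (m - k).factorial * (n - m).factorial)
        = n.choose m * (m.choose k * k.factorial * (m - k).factorial) * (n - m).factorial := by ring
      _ = n.choose m * m.factorial * (n - m).factorial := by rw [h2]
      _ = n.factorial := h1
      _ = n.choose k * k.factorial * (n - k).factorial := h4.symm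
      _ = n.choose k * k.factorial * ((n - k).choose (m - k) * (m - k).factorial * ((n - k) - (m - k)).factorial) := by rw [h3]
      _ = n.choose k * (n - k).choose (m - k) * (k.factorial * (m - k).factorial * (n - m).factorial) := by
          rw [e1]; ring
  exact Nat.eq_of_mul_eq_mul_right (by positivity) key

lemma vander (y z m : ℕ) :
    ∑ k ∈ range (m + 1), y.choose k * z.choose (m - k) = (y + z).choose m := by
  rw [Nat.add_choose_eq, Finset.Nat.sum_antidiagonal_eq_sum_range_succ_mk]

lemma mul_choose_succ (y j : ℕ) : (j + 1) * y.choose (j + 1) = y * (y - 1).choose j := by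
  cases y with
  | zero => simp
  | succ n =>
    have := Nat.add_one_mul_choose_eq n j
    simpa [Nat.succ_eq_add_one, mul_comm] using this.symm

lemma sub_mul_choose (y k : ℕ) : (y - k) * y.choose k = y * (y - 1).choose k := by
  rw [mul_comm, ← Nat.choose_succ_right_eq, mul_comm, mul_choose_succ]

lemma wvander (y z m : ℕ) (hm : 1 ≤ m) :
    ∑ k ∈ range (m + 1), k * (y.choose k * z.choose (m - k))
      = y * (y + z - 1).choose (m - 1) := by
  obtain ⟨m, rfl⟩ : ∃ m', m = m' + 1 := ⟨m - 1, by omega⟩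
  rw [Finset.sum_range_succ']
  simp only [Nat.zero_eq, zero_mul, add_zero]
  have : ∀ i ∈ range (m + 1), (i + 1) * (y.choose (i + 1) * z.choose (m + 1 - (i + 1)))
      = y * ((y - 1).choose i * z.choose (m - i)) := by
    intro i hi
    have : m + 1 - (i + 1) = m - i := by omega
    rw [this, ← mul_assoc, mul_choose_succ, mul_assoc]
  rw [Finset.sum_congr rfl this, ← Finset.mul_sum, vander]
  cases y with
  | zero => simp
  | succ n => congr 2 <;> omega

lemma sum1Nat (y z m : ℕ) (hm : 1 ≤ m) :
    ∑ k ∈ range (m + 1), (m + k) * (y.choose k * z.choose (m - k))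
      = m * (y + z).choose m + y * (y + z - 1).choose (m - 1) := by
  have : ∀ k ∈ range (m+1), (m + k) * (y.choose k * z.choose (m - k))
      = m * (y.choose k * z.choose (m - k)) + k * (y.choose k * z.choose (m - k)) := by
    intro k _; ring
  rw [Finset.sum_congr rfl this, Finset.sum_add_distrib, ← Finset.mul_sum, vander,
    wvander y z m hm]

lemma sum2Nat (y z m : ℕ) (hm : 1 ≤ m) :
    ∑ k ∈ range (m + 1), ((y - k) * (k + 1)) * (y.choose k * z.choose (m - k))
      = y * ((y - 1) * (y - 1 + z - 1).choose (m - 1) + (y - 1 + z).choose m) := by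
  have : ∀ k ∈ range (m+1), ((y - k) * (k + 1)) * (y.choose k * z.choose (m - k))
      = y * (k * ((y-1).choose k * z.choose (m - k)) + ((y-1).choose k * z.choose (m - k))) := by
    intro k _
    have h := sub_mul_choose y k
    calc ((y - k) * (k + 1)) * (y.choose k * z.choose (m - k))
        = (k + 1) * (((y - k) * y.choose k) * z.choose (m - k)) := by ring
      _ = (k + 1) * ((y * (y-1).choose k) * z.choose (m - k)) := by rw [h]
      _ = y * (k * ((y-1).choose k * z.choose (m - k)) + ((y-1).choose k * z.choose (m - k))) := by ring
  rw [Finset.sum_congr rfl this, ← Finset.mul_sum]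
  congr 1
  rw [Finset.sum_add_distrib, wvander _ z m hm, vander]

lemma ichoose_eq_choose {a b : ℤ} (hb : 0 ≤ b) (hba : b ≤ a) :
    ichoose a b = a.toNat.choose b.toNat := if_pos ⟨hb, hba⟩

lemma inner_collapse (f : ℤ → ℝ) (n : ℤ) (h0 : n < 0 → f 0 = 0) (h1 : n ≤ 0 → f 1 = 0)
    (hz : ∀ q : ℤ, 2 ≤ q → f q = 0) : ∑ q ∈ Finset.Icc (0:ℤ) n, f q = f 0 + f 1 := by
  rcases lt_trichotomy n 0 with h | h | h
  · rw [Finset.Icc_eq_empty (by omega), Finset.sum_empty, h0 h, h1 h.le, add_zero]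
  · subst h
    rw [Finset.Icc_self, Finset.sum_singleton, h1 le_rfl, add_zero]
  · have hsub : Finset.Icc (0:ℤ) 1 ⊆ Finset.Icc (0:ℤ) n := Finset.Icc_subset_Icc_right (by omega)
    rw [← Finset.sum_subset hsub (fun x hx hnx => by
      apply hz
      simp only [Finset.mem_Icc] at hx hnx
      omega)]
    have : Finset.Icc (0:ℤ) 1 = {0, 1} := by
      ext x; simp only [Finset.mem_Icc, Finset.mem_insert, Finset.mem_singleton]; omega
    rw [this, Finset.sum_pair (by norm_num)]

/-- The symmetric-cloning fidelity expression at `L = 1` evaluates to the standard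
single-clone fidelity `M/N + (N−M)(M+1)/(N(M+d))` of universal `M → N` cloning. -/
theorem symmetric_cloning_single_clone_fidelity (d M N : ℕ) (hd : 2 ≤ d) (hM : 1 ≤ M)
    (hMN : M < N) :
    (1 / (N : ℝ)) * ((ichoose ((M : ℤ) + d - 1) (M : ℤ) : ℝ) / (ichoose ((N : ℤ) + d - 1) (M : ℤ) : ℝ)) *
      ∑ i ∈ Finset.range (M + 1),
        (ichoose (M : ℤ) (i : ℤ) : ℝ) * (ichoose ((N : ℤ) - M) ((M : ℤ) - i) : ℝ) *
          ∑ q ∈ Finset.Icc (0 : ℤ) ((N : ℤ) + i - 2 * M),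
            (ichoose ((N : ℤ) + i - 2 * M) q : ℝ) * (ichoose (2 * (M : ℤ) - i) (1 - q) : ℝ) /
              (ichoose ((M : ℤ) + d - 1 - i + q) ((d : ℤ) - 1) : ℝ)
    = (M : ℝ) / N + ((N : ℝ) - M) * ((M : ℝ) + 1) / ((N : ℝ) * ((M : ℝ) + d)) := by
  have hpreA : ichoose ((M : ℤ) + d - 1) (M : ℤ) = (M + d - 1).choose M := by
    rw [ichoose_eq_choose (by positivity) (by omega)]
    congr 1 <;> omega
  have hpreV : ichoose ((N : ℤ) + d - 1) (M : ℤ) = (N + d - 1).choose M := by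
    rw [ichoose_eq_choose (by positivity) (by omega)]
    congr 1 <;> omega
  -- the clean k-indexed term
  set g : ℕ → ℝ := fun k =>
      (((M + k) * ((N - M).choose k * (M + d - 1).choose (M - k)) : ℕ) : ℝ)
        / ((M + d - 1).choose M : ℕ)
      + ((((N - M - k) * (k + 1)) * ((N - M).choose k * (M + d).choose (M - k)) : ℕ) : ℝ)
        / ((d : ℝ) * ((M + d).choose M : ℕ)) with hg
  have key : ∀ i ∈ range (M + 1),
      (ichoose (M : ℤ) (i : ℤ) : ℝ) * (ichoose ((N : ℤ) - M) ((M : ℤ) - i) : ℝ) *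
          ∑ q ∈ Finset.Icc (0 : ℤ) ((N : ℤ) + i - 2 * M),
            (ichoose ((N : ℤ) + i - 2 * M) q : ℝ) * (ichoose (2 * (M : ℤ) - i) (1 - q) : ℝ) /
              (ichoose ((M : ℤ) + d - 1 - i + q) ((d : ℤ) - 1) : ℝ)
        = g (M - i) := by
    intro i hi
    rw [Finset.mem_range] at hi
    have hiM : i ≤ M := by omega
    rw [inner_collapse _ ((N : ℤ) + i - 2 * M)
      (fun h => by rw [show ichoose ((N : ℤ) + i - 2 * M) 0 = 0 from if_neg (by omega)]; simp)
      (fun h => by rw [show ichoose ((N : ℤ) + i - 2 * M) 1 = 0 from if_neg (by omega)]; simp)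
      (fun q hq => by rw [show ichoose (2 * (M : ℤ) - i) (1 - q) = 0 from if_neg (by omega)]; simp)]
    have hMi : ichoose (M : ℤ) (i : ℤ) = M.choose i := by
      rw [ichoose_eq_choose (by positivity) (by omega)]; congr 1 <;> omega
    by_cases hcase : 2 * M ≤ N + i
    · -- all binomials evaluate
      have hNM : ichoose ((N : ℤ) - M) ((M : ℤ) - i) = (N - M).choose (M - i) := by
        rw [ichoose_eq_choose (by omega) (by omega)]; congr 1 <;> omega
      have hn0 : ichoose ((N : ℤ) + i - 2 * M) 0 = 1 := by
        rw [ichoose_eq_choose le_rfl (by omega)]; simp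
      have hc1 : ichoose (2 * (M : ℤ) - i) (1 - 0) = 2 * M - i := by
        rw [show (1 - 0 : ℤ) = 1 by norm_num, ichoose_eq_choose (by omega) (by omega)]
        rw [show ((1:ℤ)).toNat = 1 from rfl, Nat.choose_one_right]
        omega
      have hD1 : ichoose ((M : ℤ) + d - 1 - i + 0) ((d : ℤ) - 1) = (M + d - 1 - i).choose (d - 1) := by
        rw [ichoose_eq_choose (by omega) (by omega)]; congr 1 <;> omega
      have hn1 : (ichoose ((N : ℤ) + i - 2 * M) 1 : ℝ) = (N : ℝ) + i - 2 * M := by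
        rcases eq_or_lt_of_le (show (0:ℤ) ≤ (N : ℤ) + i - 2 * M by omega) with h0 | h0
        · rw [show ichoose ((N : ℤ) + i - 2 * M) 1 = 0 from if_neg (by omega)]
          push_cast
          have : (N : ℝ) + i - 2 * M = 0 := by exact_mod_cast congrArg (Int.cast : ℤ → ℝ) h0.symm
          simp [this]
        · rw [ichoose_eq_choose (by omega) (by omega), show ((1:ℤ)).toNat = 1 from rfl,
            Nat.choose_one_right]
          have h2 : (((N : ℤ) + i - 2 * M).toNat : ℤ) = (N : ℤ) + i - 2 * M := by omega
          calc ((((N : ℤ) + i - 2 * M).toNat : ℕ) : ℝ)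
              = ((((N : ℤ) + i - 2 * M).toNat : ℤ) : ℝ) := by push_cast; ring
            _ = (N : ℝ) + i - 2 * M := by rw [h2]; push_cast; ring
      have hc0 : ichoose (2 * (M : ℤ) - i) (1 - 1) = 1 := by
        rw [show (1 - 1 : ℤ) = 0 by norm_num, ichoose_eq_choose le_rfl (by omega)]; simp
      have hD2 : ichoose ((M : ℤ) + d - 1 - i + 1) ((d : ℤ) - 1) = (M + d - i).choose (d - 1) := by
        rw [ichoose_eq_choose (by omega) (by omega)]; congr 1 <;> omega
      rw [hMi, hNM, hn0, hc1, hD1, hn1, hc0, hD2, hg]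
      -- simplify the ℕ-subtraction indices in g (M - i)
      have e1 : M - (M - i) = i := by omega
      have e2 : M + (M - i) = 2 * M - i := by omega
      have e3 : N - M - (M - i) = N + i - 2 * M := by omega
      have e4 : M + d - 1 - i = (M - i) + d - 1 := by omega
      have e5 : M + d - i = (M - i) + d := by omega
      simp only [e1, e2, e3]
      have hD1pos : 0 < (M + d - 1 - i).choose (d - 1) := Nat.choose_pos (by omega)
      have hD2pos : 0 < (M + d - i).choose (d - 1) := Nat.choose_pos (by omega)
      have hApos : 0 < (M + d - 1).choose M := Nat.choose_pos (by omega)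
      have hBpos : 0 < (M + d).choose M := Nat.choose_pos (by omega)
      have I1 : (M + d - 1).choose M * M.choose i
          = (M + d - 1).choose i * (M + d - 1 - i).choose (d - 1) := by
        have := trin (n := M + d - 1) (m := M) (k := i) hiM (by omega)
        rw [this]
        congr 1
        rw [show M - i = (M + d - 1 - i) - (d - 1) by omega,
          Nat.choose_symm (show d - 1 ≤ M + d - 1 - i by omega)]
      have I2 : (M + d).choose M * M.choose i
          = (M + d).choose i * (M + d - i).choose (M - i) := by
        exact trin (n := M + d) (m := M) (k := i) hiM (by omega)
      have I2' : (M - i + 1) * (M + d - i).choose (d - 1) = d * (M + d - i).choose (M - i) := by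
        have hsymm : (M + d - i).choose (d - 1) = (M + d - i).choose (M - i + 1) := by
          rw [show d - 1 = (M + d - i) - (M - i + 1) by omega,
            Nat.choose_symm (show M - i + 1 ≤ M + d - i by omega)]
        rw [hsymm, mul_comm, Nat.choose_succ_right_eq,
          show M + d - i - (M - i) = d by omega]
        ring
      have hD1ne : ((M + d - 1 - i).choose (d - 1) : ℝ) ≠ 0 := (Nat.cast_pos.mpr hD1pos).ne'
      have hD2ne : ((M + d - i).choose (d - 1) : ℝ) ≠ 0 := (Nat.cast_pos.mpr hD2pos).ne'
      have hAne : ((M + d - 1).choose M : ℝ) ≠ 0 := (Nat.cast_pos.mpr hApos).ne'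
      have hBne : ((M + d).choose M : ℝ) ≠ 0 := (Nat.cast_pos.mpr hBpos).ne'
      have hdne : (d : ℝ) ≠ 0 := by positivity
      have hI1c : ((M + d - 1).choose M : ℝ) * (M.choose i : ℝ)
          = ((M + d - 1).choose i : ℝ) * ((M + d - 1 - i).choose (d - 1) : ℝ) := by
        exact_mod_cast I1
      have hI2c : ((M + d).choose M : ℝ) * (M.choose i : ℝ)
          = ((M + d).choose i : ℝ) * ((M + d - i).choose (M - i) : ℝ) := by
        exact_mod_cast I2
      have hI2'c : ((M : ℝ) - i + 1) * ((M + d - i).choose (d - 1) : ℝ)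
          = (d : ℝ) * ((M + d - i).choose (M - i) : ℝ) := by
        have h := congrArg (Nat.cast : ℕ → ℝ) I2'
        push_cast [Nat.cast_sub hiM] at h
        linarith [h]
      push_cast [Nat.cast_sub (show 2 * M ≤ N + i by omega),
        Nat.cast_sub (show i ≤ 2 * M by omega), Nat.cast_sub hiM]
      field_simp
      linear_combination ((2 * (M:ℝ) - i) * ((N - M).choose (M - i) : ℝ) * d * ((M + d).choose M : ℝ) * ((M + d - i).choose (d - 1) : ℝ)) * hI1c + (((N:ℝ) + i - 2 * M) * ((N - M).choose (M - i) : ℝ) * ((M + d - 1).choose M : ℝ) * ((M + d - 1 - i).choose (d - 1) : ℝ) * d) * hI2c - (((N:ℝ) + i - 2 * M) * ((N - M).choose (M - i) : ℝ) * ((M + d - 1).choose M : ℝ) * ((M + d - 1 - i).choose (d - 1) : ℝ) * ((M + d).choose i : ℝ)) * hI2'c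
    · -- degenerate case: both sides vanish
      have hNM : ichoose ((N : ℤ) - M) ((M : ℤ) - i) = 0 := if_neg (by omega)
      have hNM' : (N - M).choose (M - i) = 0 := Nat.choose_eq_zero_of_lt (by omega)
      rw [hMi, hNM, hg]
      simp [hNM']
  
  rw [hpreA, hpreV, Finset.sum_congr rfl key]
  have hrefl : ∑ i ∈ range (M + 1), g (M - i) = ∑ k ∈ range (M + 1), g k := by
    rw [← Finset.sum_range_reflect]
    exact Finset.sum_congr rfl (fun j hj => by rw [Finset.mem_range] at hj; congr 1; omega)
  rw [hrefl]
  have hsplit : ∑ k ∈ range (M + 1), g k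
      = ((∑ k ∈ range (M + 1), (M + k) * ((N - M).choose k * (M + d - 1).choose (M - k)) : ℕ) : ℝ)
          / ((M + d - 1).choose M : ℕ)
        + ((∑ k ∈ range (M + 1), ((N - M - k) * (k + 1)) * ((N - M).choose k * (M + d).choose (M - k)) : ℕ) : ℝ)
          / ((d : ℝ) * ((M + d).choose M : ℕ)) := by
    rw [hg, Finset.sum_add_distrib, ← Finset.sum_div, ← Finset.sum_div, ← Nat.cast_sum,
      ← Nat.cast_sum]
  rw [hsplit, sum1Nat (N - M) (M + d - 1) M hM, sum2Nat (N - M) (M + d) M hM]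
  rw [show N - M + (M + d - 1) - 1 = N + d - 2 by omega,
    show N - M + (M + d - 1) = N + d - 1 by omega,
    show N - M - 1 + (M + d) - 1 = N + d - 2 by omega,
    show N - M - 1 + (M + d) = N + d - 1 by omega]
  -- remaining: pure arithmetic with binomial ratio identities
  have hApos : 0 < (M + d - 1).choose M := Nat.choose_pos (by omega)
  have hVpos : 0 < (N + d - 1).choose M := Nat.choose_pos (by omega)
  have hBpos : 0 < (M + d).choose M := Nat.choose_pos (by omega)
  have hAB : (M + d - 1).choose M * (M + d) = (M + d).choose M * d := by
    have := Nat.choose_mul_succ_eq (M + d - 1) M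
    rw [show M + d - 1 + 1 = M + d by omega] at this
    rw [this, show M + d - M = d by omega]
  have hWV : (N + d - 1) * (N + d - 2).choose (M - 1) = (N + d - 1).choose M * M := by
    have := Nat.add_one_mul_choose_eq (N + d - 2) (M - 1)
    rw [show N + d - 2 + 1 = N + d - 1 by omega, show M - 1 + 1 = M by omega] at this
    exact this
  have hAne : ((M + d - 1).choose M : ℝ) ≠ 0 := (Nat.cast_pos.mpr hApos).ne'
  have hVne : ((N + d - 1).choose M : ℝ) ≠ 0 := (Nat.cast_pos.mpr hVpos).ne'
  have hBne : ((M + d).choose M : ℝ) ≠ 0 := (Nat.cast_pos.mpr hBpos).ne'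
  have hdne : (d : ℝ) ≠ 0 := (Nat.cast_pos.mpr (show 0 < d by omega)).ne'
  have hNne : (N : ℝ) ≠ 0 := (Nat.cast_pos.mpr (show 0 < N by omega)).ne'
  have hMdne : (M : ℝ) + d ≠ 0 := by
    have : (0:ℝ) < (d:ℝ) := Nat.cast_pos.mpr (show 0 < d by omega)
    have hM0 : (0:ℝ) ≤ (M:ℝ) := Nat.cast_nonneg M
    linarith
  have hNd1ne : (N : ℝ) + d - 1 ≠ 0 := by
    have : (1:ℝ) ≤ (N : ℝ) + d - 1 := by
      have h1 : (1:ℝ) ≤ (N:ℝ) := by exact_mod_cast Nat.one_le_iff_ne_zero.mpr (by omega)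
      have h2 : (2:ℝ) ≤ (d:ℝ) := by exact_mod_cast hd
      linarith
    linarith
  have hBc : (((M + d).choose M : ℕ) : ℝ) = ((M : ℝ) + d) * ((M + d - 1).choose M : ℕ) / d := by
    rw [eq_div_iff hdne]
    have := congrArg (Nat.cast : ℕ → ℝ) hAB
    push_cast at this
    linear_combination -this
  have hWc : (((N + d - 2).choose (M - 1) : ℕ) : ℝ)
      = (M : ℝ) * ((N + d - 1).choose M : ℕ) / ((N : ℝ) + d - 1) := by
    rw [eq_div_iff hNd1ne]
    have := congrArg (Nat.cast : ℕ → ℝ) hWV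
    push_cast [Nat.cast_sub (show 1 ≤ N + d by omega)] at this
    linear_combination this
  push_cast [Nat.cast_sub hMN.le, Nat.cast_sub (show 1 ≤ N - M by omega),
    Nat.cast_sub (show 1 ≤ M by omega)]
  push_cast [Nat.cast_sub (show M ≤ N by omega)] at hWc ⊢
  rw [hBc, hWc]
  field_simp
  ring
end

section
/- Let d ≥ 2, 1 ≤ M < N and 1 ≤ L ≤ N be integers. Then (C(M+d−1, M)/C(N+d−1, M)) · Σ_{i=0}^{M} C(M, i) · C(N−M, M−i) · Σ_{q=0}^{N+i−2M} C(N+i−2M, q) · C(2M−i, L−q) / C(M+d−1−i+q, d−1) = (1/C(N+d−1, N−M)) · Σ_{i=0}^{M} Σ_{q=0}^{N} C(M, i) · C(q−M, i) · C(N−M+d−1, N−q) · C(M+i, q−L). Here the sum over q on the left is empty when N+i−2M < 0, and a binomial coefficient C(a, b) of integers is taken to be 0 unless 0 ≤ b ≤ a. -/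
lemma ichoose_coe (a b : ℕ) : ichoose (a : ℤ) (b : ℤ) = a.choose b := by
  unfold ichoose
  split_ifs with h
  · simp
  · push_neg at h
    have hba : a < b := by omega
    exact (Nat.choose_eq_zero_of_lt hba).symm

lemma ichoose_symm (a b : ℤ) (ha : 0 ≤ a) : ichoose a b = ichoose a (a - b) := by
  unfold ichoose
  by_cases h : 0 ≤ b ∧ b ≤ a
  · rw [if_pos h, if_pos (by omega : 0 ≤ a - b ∧ a - b ≤ a)]
    have hb : b.toNat ≤ a.toNat := by omega
    have h2 : (a - b).toNat = a.toNat - b.toNat := by omega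
    rw [h2]
    exact (Nat.choose_symm hb).symm
  · rw [if_neg h, if_neg (by omega)]

/-- Key scalar binomial identity (in ℝ). -/
lemma core_ident (e M n a j : ℕ) (han : a + j ≤ n) :
    (((M + e).choose M : ℝ) / ((M + n + e).choose M)) *
        ((n.choose a : ℝ) * ((n - a).choose j : ℝ) / ((a + j + e).choose e : ℝ))
      = (1 / ((M + n + e).choose n : ℝ)) *
          (((a + j).choose a : ℝ) * ((n + e).choose (n - a - j) : ℝ)) := by
  have F : ∀ m : ℕ, (Nat.factorial m : ℝ) ≠ 0 :=
    fun m => Nat.cast_ne_zero.mpr (Nat.factorial_ne_zero m)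
  rw [Nat.cast_choose ℝ (by omega : M ≤ M + e),
    Nat.cast_choose ℝ (by omega : M ≤ M + n + e),
    Nat.cast_choose ℝ (by omega : a ≤ n),
    Nat.cast_choose ℝ (by omega : j ≤ n - a),
    Nat.cast_choose ℝ (by omega : e ≤ a + j + e),
    Nat.cast_choose ℝ (by omega : n ≤ M + n + e),
    Nat.cast_choose ℝ (by omega : a ≤ a + j),
    Nat.cast_choose ℝ (by omega : n - a - j ≤ n + e)]
  rw [(by omega : M + e - M = e), (by omega : M + n + e - M = n + e),
    (by omega : a + j + e - e = a + j),
    (by omega : M + n + e - n = M + e), (by omega : a + j - a = j),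
    (by omega : n + e - (n - a - j) = a + j + e)]
  field_simp

lemma sum_range_int (K : ℕ) (f : ℤ → ℝ) :
    ∑ p ∈ Finset.range (K + 1), f (p : ℤ) = ∑ p ∈ Finset.Icc (0 : ℤ) (K : ℤ), f p := by
  have h : Finset.Icc (0 : ℤ) (K : ℤ)
      = Finset.map ⟨Nat.cast, Nat.cast_injective⟩ (Finset.range (K + 1)) := by
    ext x
    simp only [Finset.mem_Icc, Finset.mem_map, Finset.mem_range, Function.Embedding.coeFn_mk]
    constructor
    · rintro ⟨h0, h1⟩
      exact ⟨x.toNat, by omega, by omega⟩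
    · rintro ⟨m, hm, rfl⟩
      omega
  rw [h, Finset.sum_map]
  rfl

/-- Equality of the two expressions for the optimal fidelity of symmetric universal
`M → N` cloning of `d`-dimensional systems measured on subsets of `L` clones. -/
theorem symmetric_cloning_fidelity_formulas (d M N L : ℕ) (hd : 2 ≤ d) (hM : 1 ≤ M)
    (hMN : M < N) (hL1 : 1 ≤ L) (hLN : L ≤ N) :
    ((ichoose ((M : ℤ) + d - 1) (M : ℤ) : ℝ) / (ichoose ((N : ℤ) + d - 1) (M : ℤ) : ℝ)) *
      ∑ i ∈ Finset.range (M + 1),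
        (ichoose (M : ℤ) (i : ℤ) : ℝ) * (ichoose ((N : ℤ) - M) ((M : ℤ) - i) : ℝ) *
          ∑ q ∈ Finset.Icc (0 : ℤ) ((N : ℤ) + i - 2 * M),
            (ichoose ((N : ℤ) + i - 2 * M) q : ℝ) * (ichoose (2 * (M : ℤ) - i) ((L : ℤ) - q) : ℝ) /
              (ichoose ((M : ℤ) + d - 1 - i + q) ((d : ℤ) - 1) : ℝ)
    = (1 / (ichoose ((N : ℤ) + d - 1) ((N : ℤ) - M) : ℝ)) *
        ∑ i ∈ Finset.range (M + 1), ∑ q ∈ Finset.range (N + 1),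
          (ichoose (M : ℤ) (i : ℤ) : ℝ) * (ichoose ((q : ℤ) - M) (i : ℤ) : ℝ) *
            (ichoose ((N : ℤ) - M + d - 1) ((N : ℤ) - q) : ℝ) *
            (ichoose ((M : ℤ) + i) ((q : ℤ) - L) : ℝ) := by
  obtain ⟨e, rfl⟩ : ∃ e, d = e + 1 := ⟨d - 1, by omega⟩
  obtain ⟨n, rfl⟩ : ∃ n, N = M + n := ⟨N - M, by omega⟩
  have he : 1 ≤ e := by omega
  have hn : 1 ≤ n := by omega
  -- the RHS inner sum, as a function of the outer index
  set G : ℕ → ℝ := fun j => ∑ q ∈ Finset.range (M + n + 1),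
      (ichoose (M : ℤ) (j : ℤ) : ℝ) * (ichoose ((q : ℤ) - M) (j : ℤ) : ℝ) *
        (ichoose (((M + n : ℕ) : ℤ) - M + ((e + 1 : ℕ) : ℤ) - 1) (((M + n : ℕ) : ℤ) - q) : ℝ) *
        (ichoose ((M : ℤ) + j) ((q : ℤ) - L) : ℝ) with hG
  -- normalize the constant prefactors
  have hc1 : ichoose ((M : ℤ) + ((e + 1 : ℕ) : ℤ) - 1) (M : ℤ) = (M + e).choose M := by
    rw [(by push_cast; ring : ((M : ℤ) + ((e + 1 : ℕ) : ℤ) - 1) = ((M + e : ℕ) : ℤ)), ichoose_coe]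
  have hc2 : ichoose (((M + n : ℕ) : ℤ) + ((e + 1 : ℕ) : ℤ) - 1) (M : ℤ) = (M + n + e).choose M := by
    rw [(by push_cast; ring : (((M + n : ℕ) : ℤ) + ((e + 1 : ℕ) : ℤ) - 1) = ((M + n + e : ℕ) : ℤ)),
      ichoose_coe]
  have hc3 : ichoose (((M + n : ℕ) : ℤ) + ((e + 1 : ℕ) : ℤ) - 1) (((M + n : ℕ) : ℤ) - M)
      = (M + n + e).choose n := by
    rw [(by push_cast; ring : (((M + n : ℕ) : ℤ) + ((e + 1 : ℕ) : ℤ) - 1) = ((M + n + e : ℕ) : ℤ)),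
      (by push_cast; ring : (((M + n : ℕ) : ℤ) - (M : ℤ)) = ((n : ℕ) : ℤ)), ichoose_coe]
  -- per-index identity
  have key : ∀ i ∈ Finset.range (M + 1),
      ((ichoose ((M : ℤ) + ((e + 1 : ℕ) : ℤ) - 1) (M : ℤ) : ℝ) /
          (ichoose (((M + n : ℕ) : ℤ) + ((e + 1 : ℕ) : ℤ) - 1) (M : ℤ) : ℝ)) *
        ((ichoose (M : ℤ) (i : ℤ) : ℝ) * (ichoose (((M + n : ℕ) : ℤ) - M) ((M : ℤ) - i) : ℝ) *
          ∑ q ∈ Finset.Icc (0 : ℤ) (((M + n : ℕ) : ℤ) + i - 2 * M),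
            (ichoose (((M + n : ℕ) : ℤ) + i - 2 * M) q : ℝ) *
              (ichoose (2 * (M : ℤ) - i) ((L : ℤ) - q) : ℝ) /
              (ichoose ((M : ℤ) + ((e + 1 : ℕ) : ℤ) - 1 - i + q) (((e + 1 : ℕ) : ℤ) - 1) : ℝ))
      = (1 / ((M + n + e).choose n : ℝ)) * G (M - i) := by
    intro i hi
    rw [Finset.mem_range] at hi
    have hiM : i ≤ M := by omega
    set a : ℕ := M - i with ha
    -- RHS: range sum → Icc sum over ℤ
    have hs1 : G a = ∑ p ∈ Finset.Icc (0 : ℤ) ((M + n : ℕ) : ℤ),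
        ((ichoose (M : ℤ) (a : ℤ) : ℝ) * (ichoose (p - M) (a : ℤ) : ℝ) *
          (ichoose (((M + n : ℕ) : ℤ) - M + ((e + 1 : ℕ) : ℤ) - 1) (((M + n : ℕ) : ℤ) - p) : ℝ) *
          (ichoose ((M : ℤ) + a) (p - L) : ℝ)) := by
      rw [hG]
      exact sum_range_int (M + n) (fun p =>
        ((ichoose (M : ℤ) (a : ℤ) : ℝ) * (ichoose (p - M) (a : ℤ) : ℝ) *
          (ichoose (((M + n : ℕ) : ℤ) - M + ((e + 1 : ℕ) : ℤ) - 1) (((M + n : ℕ) : ℤ) - p) : ℝ) *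
          (ichoose ((M : ℤ) + a) (p - L) : ℝ)))
    -- drop vanishing terms with p < M + a
    have hs2 : ∑ p ∈ Finset.Icc (0 : ℤ) ((M + n : ℕ) : ℤ),
        ((ichoose (M : ℤ) (a : ℤ) : ℝ) * (ichoose (p - M) (a : ℤ) : ℝ) *
          (ichoose (((M + n : ℕ) : ℤ) - M + ((e + 1 : ℕ) : ℤ) - 1) (((M + n : ℕ) : ℤ) - p) : ℝ) *
          (ichoose ((M : ℤ) + a) (p - L) : ℝ))
        = ∑ p ∈ Finset.Icc ((M : ℤ) + a) ((M + n : ℕ) : ℤ),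
        ((ichoose (M : ℤ) (a : ℤ) : ℝ) * (ichoose (p - M) (a : ℤ) : ℝ) *
          (ichoose (((M + n : ℕ) : ℤ) - M + ((e + 1 : ℕ) : ℤ) - 1) (((M + n : ℕ) : ℤ) - p) : ℝ) *
          (ichoose ((M : ℤ) + a) (p - L) : ℝ)) := by
      refine (Finset.sum_subset (Finset.Icc_subset_Icc (by positivity) le_rfl) ?_).symm
      intro x hx hnx
      rw [Finset.mem_Icc] at hx
      rw [Finset.mem_Icc] at hnx
      have hxlt : x < (M : ℤ) + a := by omega
      have h0 : ichoose (x - (M : ℤ)) ((a : ℕ) : ℤ) = 0 := by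
        simp only [ichoose]
        rw [if_neg (by omega : ¬((0 : ℤ) ≤ (a : ℤ) ∧ (a : ℤ) ≤ x - (M : ℤ)))]
      rw [h0]
      simp
    -- reindex p = M + a + q
    have hs3 : ∑ p ∈ Finset.Icc ((M : ℤ) + a) ((M + n : ℕ) : ℤ),
        ((ichoose (M : ℤ) (a : ℤ) : ℝ) * (ichoose (p - M) (a : ℤ) : ℝ) *
          (ichoose (((M + n : ℕ) : ℤ) - M + ((e + 1 : ℕ) : ℤ) - 1) (((M + n : ℕ) : ℤ) - p) : ℝ) *
          (ichoose ((M : ℤ) + a) (p - L) : ℝ))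
        = ∑ q ∈ Finset.Icc (0 : ℤ) (((M + n : ℕ) : ℤ) + i - 2 * M),
        ((ichoose (M : ℤ) (a : ℤ) : ℝ) * (ichoose ((M : ℤ) + a + q - M) (a : ℤ) : ℝ) *
          (ichoose (((M + n : ℕ) : ℤ) - M + ((e + 1 : ℕ) : ℤ) - 1)
            (((M + n : ℕ) : ℤ) - ((M : ℤ) + a + q)) : ℝ) *
          (ichoose ((M : ℤ) + a) ((M : ℤ) + a + q - L) : ℝ)) := by
      have h1 : ((M : ℤ) + a) + 0 = (M : ℤ) + a := by ring
      have h2 : ((M : ℤ) + a) + (((M + n : ℕ) : ℤ) + i - 2 * M) = ((M + n : ℕ) : ℤ) := by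
        push_cast
        omega
      have hIcc : Finset.Icc ((M : ℤ) + a) ((M + n : ℕ) : ℤ)
          = (Finset.Icc (0 : ℤ) (((M + n : ℕ) : ℤ) + i - 2 * M)).map
              (addLeftEmbedding ((M : ℤ) + a)) := by
        rw [Finset.map_add_left_Icc, h1, h2]
      rw [hIcc, Finset.sum_map]
      refine Finset.sum_congr rfl fun q hq => ?_
      simp only [addLeftEmbedding_apply]
    rw [hs1, hs2, hs3, Finset.mul_sum, Finset.mul_sum, Finset.mul_sum]
    refine Finset.sum_congr rfl fun q hq => ?_
    rw [Finset.mem_Icc] at hq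
    obtain ⟨j, rfl⟩ : ∃ j : ℕ, q = (j : ℤ) := ⟨q.toNat, by omega⟩
    have hjn : a + j ≤ n := by omega
    have han : a ≤ n := by omega
    -- rewrite all ichoose values as Nat.choose
    have e1 : ichoose (((M + n : ℕ) : ℤ) + i - 2 * M) (j : ℤ) = (n - a).choose j := by
      rw [(by push_cast; omega : (((M + n : ℕ) : ℤ) + i - 2 * M) = ((n - a : ℕ) : ℤ)), ichoose_coe]
    have e2 : ichoose ((M : ℤ) + ((e + 1 : ℕ) : ℤ) - 1 - i + j) (((e + 1 : ℕ) : ℤ) - 1)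
        = (a + j + e).choose e := by
      rw [(by push_cast; omega :
            ((M : ℤ) + ((e + 1 : ℕ) : ℤ) - 1 - i + j) = ((a + j + e : ℕ) : ℤ)),
        (by push_cast; omega : (((e + 1 : ℕ) : ℤ) - 1) = ((e : ℕ) : ℤ)), ichoose_coe]
    have e3 : ichoose ((M : ℕ) : ℤ) ((i : ℕ) : ℤ) = M.choose i := ichoose_coe M i
    have e4 : ichoose (((M + n : ℕ) : ℤ) - M) ((M : ℤ) - i) = n.choose a := by
      rw [(by push_cast; omega : (((M + n : ℕ) : ℤ) - (M : ℤ)) = ((n : ℕ) : ℤ)),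
        (by push_cast; omega : ((M : ℤ) - i) = ((a : ℕ) : ℤ)), ichoose_coe]
    have e5 : ichoose (M : ℤ) (a : ℤ) = M.choose i := by
      rw [ichoose_coe, ha, Nat.choose_symm hiM]
    have e6 : ichoose ((M : ℤ) + a + j - M) (a : ℤ) = (a + j).choose a := by
      rw [(by push_cast; omega : ((M : ℤ) + a + j - M) = ((a + j : ℕ) : ℤ)), ichoose_coe]
    have e7 : ichoose (((M + n : ℕ) : ℤ) - M + ((e + 1 : ℕ) : ℤ) - 1)
        (((M + n : ℕ) : ℤ) - ((M : ℤ) + a + j)) = (n + e).choose (n - a - j) := by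
      rw [(by push_cast; omega :
            (((M + n : ℕ) : ℤ) - M + ((e + 1 : ℕ) : ℤ) - 1) = ((n + e : ℕ) : ℤ)),
        (by push_cast; omega :
            (((M + n : ℕ) : ℤ) - ((M : ℤ) + a + j)) = ((n - a - j : ℕ) : ℤ)), ichoose_coe]
    have e8 : ichoose (2 * (M : ℤ) - i) ((L : ℤ) - j)
        = ichoose ((M : ℤ) + a) ((M : ℤ) + a + j - L) := by
      rw [(by push_cast; omega : (2 * (M : ℤ) - i) = ((M : ℤ) + a)),
        ichoose_symm ((M : ℤ) + a) ((L : ℤ) - j) (by positivity)]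
      congr 1
      ring
    rw [hc1, hc2, e1, e2, e3, e4, e5, e6, e7, e8]
    have hcore := core_ident e M n a j hjn
    set X : ℝ := (ichoose ((M : ℤ) + a) ((M : ℤ) + a + j - L) : ℝ) with hX
    linear_combination ((M.choose i : ℝ) * X) * hcore
  -- assemble
  rw [Finset.mul_sum]
  rw [Finset.sum_congr rfl key, ← Finset.mul_sum]
  rw [hc3]
  congr 1
  have hrefl := Finset.sum_range_reflect G (M + 1)
  simp only [Nat.add_sub_cancel] at hrefl
  exact hrefl
end

section
/- Let d ≥ 2 and 1 ≤ M < N be integers. Then (C(M+d−1, M)/C(N+d−1, M)) · Σ_{i=0}^{M} C(M, i) · C(N−M, M−i) · Σ_{q=0}^{N+i−2M} C(N+i−2M, q) · C(2M−i, N−q) / C(M+d−1−i+q, d−1) = C(M+d−1, M)/C(N+d−1, N). Here the inner sum over q is empty when N+i−2M < 0, and a binomial coefficient C(a, b) is taken to be 0 unless 0 ≤ b ≤ a. -/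
lemma ichoose_natCast (a b : ℕ) : ichoose a b = a.choose b := by
  unfold ichoose
  split_ifs with h
  · simp
  · exact (Nat.choose_eq_zero_of_lt (by omega)).symm

lemma ichoose_eq_choose_s5 {a b : ℤ} {m k : ℕ} (ha : a = m) (hb : b = k) :
    ichoose a b = m.choose k := by
  subst ha hb
  exact ichoose_natCast m k

lemma ichoose_self {a : ℤ} (ha : 0 ≤ a) : ichoose a a = 1 := by
  simp [ichoose, ha]

lemma ichoose_eq_zero_of_lt {a b : ℤ} (h : a < b) : ichoose a b = 0 :=
  if_neg (by omega)

lemma sum_Icc_ichoose_mul_ichoose_sub_div {m s n : ℤ} (hm : 0 ≤ m) (hs : 0 ≤ s)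
    (hn : m + s = n) (g : ℤ → ℝ) :
    ∑ q ∈ Finset.Icc 0 m, (ichoose m q : ℝ) * ichoose s (n - q) / g q = 1 / g m := by
  rw [Finset.sum_eq_single_of_mem m (Finset.mem_Icc.2 ⟨hm, le_rfl⟩)]
  · rw [ichoose_self hm, show n - m = s by omega, ichoose_self hs]
    simp
  · intro q hq hqm
    have hqm' : q < m := lt_of_le_of_ne (Finset.mem_Icc.1 hq).2 hqm
    rw [ichoose_eq_zero_of_lt (a := s) (by omega)]
    simp

theorem Nat.sum_range_choose_mul_choose_sub (m n k : ℕ) :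
    ∑ i ∈ Finset.range (k + 1), m.choose i * n.choose (k - i) = (m + n).choose k := by
  rw [Nat.add_choose_eq, Finset.Nat.sum_antidiagonal_eq_sum_range_succ_mk]

theorem Nat.choose_add_mul_choose_eq {M N n : ℕ} (h : M ≤ N) :
    (N + n).choose N * N.choose M = (N + n).choose M * (N - M + n).choose n := by
  rw [Nat.choose_mul h, show N + n - M = N - M + n by omega, Nat.choose_symm_add]

lemma cloning_summand_eq {d M N i : ℕ} (hd : 1 ≤ d) (hi : i ≤ M) (hMN : M ≤ N) :
    (ichoose (M : ℤ) (i : ℤ) : ℝ) * (ichoose ((N : ℤ) - M) ((M : ℤ) - i) : ℝ) *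
      ∑ q ∈ Finset.Icc (0 : ℤ) ((N : ℤ) + i - 2 * M),
        (ichoose ((N : ℤ) + i - 2 * M) q : ℝ) * (ichoose (2 * (M : ℤ) - i) ((N : ℤ) - q) : ℝ) /
          (ichoose ((M : ℤ) + d - 1 - i + q) ((d : ℤ) - 1) : ℝ)
    = M.choose i * (N - M).choose (M - i) / (N - M + (d - 1)).choose (d - 1) := by
  rw [ichoose_natCast, ichoose_eq_choose_s5 (m := N - M) (k := M - i) (by omega) (by omega)]
  by_cases hiN : 2 * M ≤ N + i
  · rw [sum_Icc_ichoose_mul_ichoose_sub_div (by omega) (by omega) (by ring),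
      ichoose_eq_choose_s5 (m := N - M + (d - 1)) (k := d - 1) (by omega) (by omega)]
    ring
  · rw [Nat.choose_eq_zero_of_lt (by omega : N - M < M - i)]
    simp

theorem symmetric_cloning_global_fidelity_general (d M N : ℕ) (hd : 2 ≤ d)
    (hMN : M < N) :
    ((ichoose ((M : ℤ) + d - 1) (M : ℤ) : ℝ) / (ichoose ((N : ℤ) + d - 1) (M : ℤ) : ℝ)) *
      ∑ i ∈ Finset.range (M + 1),
        (ichoose (M : ℤ) (i : ℤ) : ℝ) * (ichoose ((N : ℤ) - M) ((M : ℤ) - i) : ℝ) *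
          ∑ q ∈ Finset.Icc (0 : ℤ) ((N : ℤ) + i - 2 * M),
            (ichoose ((N : ℤ) + i - 2 * M) q : ℝ) * (ichoose (2 * (M : ℤ) - i) ((N : ℤ) - q) : ℝ) /
              (ichoose ((M : ℤ) + d - 1 - i + q) ((d : ℤ) - 1) : ℝ)
    = (ichoose ((M : ℤ) + d - 1) (M : ℤ) : ℝ) / (ichoose ((N : ℤ) + d - 1) (N : ℤ) : ℝ) := by
  rw [ichoose_eq_choose_s5 (m := M + (d - 1)) (by omega) rfl,
    ichoose_eq_choose_s5 (m := N + (d - 1)) (k := M) (by omega) rfl,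
    ichoose_eq_choose_s5 (m := N + (d - 1)) (k := N) (by omega) rfl,
    Finset.sum_congr rfl fun i hi =>
      cloning_summand_eq (by omega) (Finset.mem_range_succ_iff.1 hi) hMN.le,
    ← Finset.sum_div]
  rw_mod_cast [Nat.sum_range_choose_mul_choose_sub, Nat.add_sub_cancel' hMN.le]
  have key : ((N + (d - 1)).choose N : ℝ) * N.choose M
      = (N + (d - 1)).choose M * (N - M + (d - 1)).choose (d - 1) := by
    exact_mod_cast Nat.choose_add_mul_choose_eq hMN.le
  have choose_pos {a b : ℕ} (h : b ≤ a) : (0 : ℝ) < a.choose b :=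
    Nat.cast_pos.2 (Nat.choose_pos h)
  rw [div_mul_div_comm, div_eq_div_iff (mul_pos (choose_pos (by omega)) (choose_pos (by omega))).ne'
    (choose_pos (by omega)).ne']
  linear_combination ((M + (d - 1)).choose M : ℝ) * key

/-- The symmetric-cloning fidelity expression at `L = N` evaluates to the known
global fidelity `C(M+d−1, M)/C(N+d−1, N)` of universal `M → N` cloning. -/
theorem symmetric_cloning_global_fidelity (d M N : ℕ) (hd : 2 ≤ d) (hM : 1 ≤ M)
    (hMN : M < N) :
    ((ichoose ((M : ℤ) + d - 1) (M : ℤ) : ℝ) / (ichoose ((N : ℤ) + d - 1) (M : ℤ) : ℝ)) *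
      ∑ i ∈ Finset.range (M + 1),
        (ichoose (M : ℤ) (i : ℤ) : ℝ) * (ichoose ((N : ℤ) - M) ((M : ℤ) - i) : ℝ) *
          ∑ q ∈ Finset.Icc (0 : ℤ) ((N : ℤ) + i - 2 * M),
            (ichoose ((N : ℤ) + i - 2 * M) q : ℝ) * (ichoose (2 * (M : ℤ) - i) ((N : ℤ) - q) : ℝ) /
              (ichoose ((M : ℤ) + d - 1 - i + q) ((d : ℤ) - 1) : ℝ)
    = (ichoose ((M : ℤ) + d - 1) (M : ℤ) : ℝ) / (ichoose ((N : ℤ) + d - 1) (N : ℤ) : ℝ) :=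
  symmetric_cloning_global_fidelity_general d M N hd hMN
end

section
/- Let d ≥ 2 and N ≥ 2 be integers, let y ∈ {0,1}^N be any bit string, and let β : Fin N → ℝ. Identify each bit string of length N and Hamming weight N−1 with the unique position at which it is 0. Then the quadratic form of G_y^{(N−1)} satisfies Σ_{n,m} β_n β_m (G_y^{(N−1)})_{n,m} = (1/d)·((Σ_n β_n)² + (d−1)·Σ_n β_n²) − ((d−1)/d)·Σ_{n : y_n = 1} β_n². -/
lemma dotB_ind {N : ℕ} (n m : Fin N) :
    dotB (fun i => decide (i ≠ n)) (fun i => decide (i ≠ m))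
      = N - ({n, m} : Finset (Fin N)).card := by
  unfold dotB
  have h : (Finset.univ.filter fun i : Fin N =>
      (decide (i ≠ n) = true) ∧ (decide (i ≠ m) = true)) = ({n, m} : Finset (Fin N))ᶜ := by
    ext i; simp [not_or]
  rw [h, Finset.card_compl]
  simp

lemma wt_ind {N : ℕ} (y : Fin N → Bool) (n m : Fin N) :
    wt (fun i => (!decide (i ≠ n) && !decide (i ≠ m) && y i))
      = if n = m ∧ y n = true then 1 else 0 := by
  unfold wt
  split_ifs with h
  · obtain ⟨rfl, hy⟩ := h
    have : (Finset.univ.filter fun i : Fin N =>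
        (!decide (i ≠ n) && !decide (i ≠ n) && y i) = true) = {n} := by
      ext i
      simp only [Finset.mem_filter, Finset.mem_univ, true_and, Finset.mem_singleton,
        Bool.and_eq_true, Bool.not_eq_true', decide_eq_false_iff_not, not_not]
      constructor
      · rintro ⟨⟨h1, _⟩, _⟩; exact h1
      · rintro rfl; exact ⟨⟨rfl, rfl⟩, hy⟩
    rw [this]; simp
  · have : (Finset.univ.filter fun i : Fin N =>
        (!decide (i ≠ n) && !decide (i ≠ m) && y i) = true) = ∅ := by
      ext i
      simp only [Finset.mem_filter, Finset.mem_univ, true_and, Finset.notMem_empty,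
        iff_false, Bool.and_eq_true, Bool.not_eq_true', decide_eq_false_iff_not, not_not]
      rintro ⟨⟨rfl, rfl⟩, hy⟩
      exact h ⟨rfl, hy⟩
    rw [this]; simp

lemma gEnt_ind {N : ℕ} (d : ℕ) (hd : 2 ≤ d) (hN : 2 ≤ N) (y : Fin N → Bool) (n m : Fin N) :
    gEnt d (N - 1) y (fun i => decide (i ≠ n)) (fun i => decide (i ≠ m))
      = 1 / (d : ℝ) + (if n = m ∧ y n = false then 1 - 1 / (d : ℝ) else 0) := by
  have hcd : Nat.choose d (d - 1) = d := by
    have h := Nat.choose_succ_self_right (d - 1)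
    have h1 : d - 1 + 1 = d := by omega
    rwa [h1] at h
  unfold gEnt
  rw [dotB_ind, wt_ind]
  by_cases hnm : n = m
  · subst hnm
    have hcard : ({n, n} : Finset (Fin N)).card = 1 := by simp
    rw [hcard]
    cases hy : y n
    · simp only [hy, and_false, if_false, Bool.false_eq_true, and_true, if_true]
      have harg : N - 1 + d - 1 - (N - 1) + 0 = d - 1 := by omega
      rw [harg, Nat.choose_self]
      norm_num
    · simp only [hy, and_true, if_true, Bool.true_eq_false, and_false, if_false]
      have harg : N - 1 + d - 1 - (N - 1) + 1 = d := by omega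
      rw [harg, hcd]
      ring
  · have hcard : ({n, m} : Finset (Fin N)).card = 2 := Finset.card_pair hnm
    rw [hcard]
    simp only [hnm, false_and, if_false]
    have harg : N - 1 + d - 1 - (N - 2) + 0 = d := by omega
    rw [harg, hcd]
    ring

/-- The quadratic form of `G_y^{(N−1)}`, with weight-(N−1) strings identified with
their unique zero position. -/
theorem quadratic_form_G_y_Nminus1 (N d : ℕ) (hN : 2 ≤ N) (hd : 2 ≤ d)
    (y : Fin N → Bool) (β : Fin N → ℝ) :
    ∑ n : Fin N, ∑ m : Fin N,
        β n * β m * gEnt d (N - 1) y (fun i => decide (i ≠ n)) (fun i => decide (i ≠ m))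
      = (1 / (d : ℝ)) * ((∑ n, β n) ^ 2 + ((d : ℝ) - 1) * ∑ n, (β n) ^ 2)
        - (((d : ℝ) - 1) / d) * ∑ n ∈ Finset.univ.filter (fun n => y n = true), (β n) ^ 2 := by
  have hd0 : (d : ℝ) ≠ 0 := by positivity
  have key : ∀ n, ∑ m, β n * β m *
      gEnt d (N - 1) y (fun i => decide (i ≠ n)) (fun i => decide (i ≠ m))
      = β n * (∑ m, β m) * (1 / (d : ℝ))
        + (if y n = false then β n ^ 2 * (1 - 1 / (d : ℝ)) else 0) := by
    intro n
    have h1 : ∀ m, β n * β m *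
        gEnt d (N - 1) y (fun i => decide (i ≠ n)) (fun i => decide (i ≠ m))
        = β n * β m * (1 / (d : ℝ))
          + (if n = m then (if y n = false then β n * β m * (1 - 1 / (d : ℝ)) else 0) else 0) := by
      intro m
      rw [gEnt_ind d hd hN y n m]
      by_cases hnm : n = m
      · subst hnm
        by_cases hy : y n = false
        all_goals simp [hy]
        all_goals ring_nf
      · simp [hnm]
    rw [Finset.sum_congr rfl (fun m _ => h1 m), Finset.sum_add_distrib,
      ← Finset.sum_mul, ← Finset.mul_sum, Finset.sum_ite_eq]
    simp [sq]
  rw [Finset.sum_congr rfl (fun n _ => key n), Finset.sum_add_distrib,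
    ← Finset.sum_mul, ← Finset.sum_mul]
  have hfilt : (Finset.univ.filter fun n : Fin N => ¬ y n = true)
      = Finset.univ.filter (fun n => y n = false) := by
    ext i; simp
  have hc := Finset.sum_filter_add_sum_filter_not Finset.univ
    (fun n : Fin N => y n = true) (fun n => β n ^ 2)
  rw [hfilt] at hc
  have hsplit : ∑ n, (if y n = false then β n ^ 2 * (1 - 1 / (d : ℝ)) else 0)
      = (∑ n ∈ Finset.univ.filter (fun n => y n = false), β n ^ 2) * (1 - 1 / (d : ℝ)) := by
    rw [Finset.sum_ite, Finset.sum_const, smul_zero, add_zero, Finset.sum_mul]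
  rw [hsplit]
  have hF : ∑ n ∈ Finset.univ.filter (fun n => y n = false), β n ^ 2
      = (∑ n, β n ^ 2)
        - ∑ n ∈ Finset.univ.filter (fun n => y n = true), β n ^ 2 := by linarith
  rw [hF]
  field_simp
  ring
end

section
/- Let d ≥ 2 and N ≥ 1 be integers, and let β : Fin N → ℝ satisfy the normalization (Σ_n β_n)² + (d−1)·Σ_n β_n² = d. Identify each bit string of length N and Hamming weight 1 with the position of its single 1. Then for every k ∈ Fin N, taking y = e_k (the weight-1 string with a 1 at position k), the quadratic form of G_{e_k}^{(1)} satisfies Σ_{n,m} β_n β_m (G_{e_k}^{(1)})_{n,m} = (d + ((d−1)·β_k + Σ_n β_n)²) / (d(d+1)). -/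
lemma dotB_eq {N : ℕ} (n m : Fin N) :
    dotB (fun i => decide (i = n)) (fun i => decide (i = m)) = if n = m then 1 else 0 := by
  unfold dotB
  by_cases h : n = m
  · subst h
    simp [Finset.filter_and, Finset.filter_eq']
  · simp only [h, if_false]
    rw [Finset.card_eq_zero, Finset.filter_eq_empty_iff]
    intro i _
    simp only [decide_eq_true_eq, not_and]
    intro hn hm
    exact h (hn ▸ hm ▸ rfl)

lemma wt_eq {N : ℕ} (n m k : Fin N) :
    wt (fun i => (!decide (i = n) && !decide (i = m) && decide (i = k))) =
      if k ≠ n ∧ k ≠ m then 1 else 0 := by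
  unfold wt
  have hset : ∀ i : Fin N, ((!decide (i = n) && !decide (i = m) && decide (i = k)) = true) ↔
      (i = k ∧ ¬ k = n ∧ ¬ k = m) := by
    intro i
    simp only [Bool.and_eq_true, Bool.not_eq_true', decide_eq_false_iff_not, decide_eq_true_eq]
    constructor
    · rintro ⟨⟨hn, hm⟩, rfl⟩; exact ⟨rfl, hn, hm⟩
    · rintro ⟨rfl, hn, hm⟩; exact ⟨⟨hn, hm⟩, rfl⟩
  by_cases h : ¬ k = n ∧ ¬ k = m
  · simp only [ne_eq, h.1, h.2, not_false_iff, and_self, if_true]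
    rw [show (Finset.univ.filter fun i =>
        (!decide (i = n) && !decide (i = m) && decide (i = k)) = true) = {k} by
      ext i
      simp only [Finset.mem_filter, Finset.mem_univ, true_and, Finset.mem_singleton, hset]
      exact ⟨fun h' => h'.1, fun h' => ⟨h', h.1, h.2⟩⟩]
    simp
  · rw [if_neg (by tauto)]
    rw [Finset.card_eq_zero, Finset.filter_eq_empty_iff]
    intro i _
    rw [hset]
    tauto

lemma gEnt_eq {N d : ℕ} (hd : 2 ≤ d) (k n m : Fin N) :
    gEnt d 1 (fun i => decide (i = k)) (fun i => decide (i = n)) (fun i => decide (i = m)) =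
      (2 + ((d:ℝ) - 1) * ((if n = m then 1 else 0) + (if n = k then 1 else 0)
          + (if m = k then 1 else 0))
        + ((d:ℝ) - 1) ^ 2 * (if n = m then 1 else 0) * (if n = k then 1 else 0))
        / ((d:ℝ) * ((d:ℝ) + 1)) := by
  have hdR : (2:ℝ) ≤ (d:ℝ) := by exact_mod_cast hd
  have hd0 : (d:ℝ) ≠ 0 := by linarith
  have hd1 : (d:ℝ) + 1 ≠ 0 := by linarith
  have hch1 : (d.choose (d - 1) : ℝ) = d := by
    rw [Nat.choose_symm (by omega : 1 ≤ d), Nat.choose_one_right]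
  have hch2 : (((d+1).choose (d - 1)) : ℝ) = (d:ℝ) * ((d:ℝ) + 1) / 2 := by
    rw [show d - 1 = (d+1) - 2 by omega, Nat.choose_symm (by omega : 2 ≤ d + 1),
      Nat.choose_two_right, show (d + 1) * (d + 1 - 1) = d * (d + 1) by rw [Nat.add_sub_cancel, Nat.mul_comm]]
    rw [Nat.cast_div (even_iff_two_dvd.mp (Nat.even_mul_succ_self d)) (by norm_num)]
    push_cast; ring
  unfold gEnt
  rw [dotB_eq n m, wt_eq n m k, show 1 + d - 1 = d from by omega]
  by_cases h1 : n = m <;> by_cases h2 : n = k <;> by_cases h3 : m = k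
  · rw [if_pos h1, if_neg (fun h => h.1 h2.symm), if_pos h1, if_pos h2, if_pos h3,
      show d - 1 + 0 = d - 1 from by omega, Nat.choose_self]
    field_simp <;> ring_nf
  · exact absurd (h1.symm.trans h2) h3
  · exact absurd (h1.trans h3) h2
  · rw [if_pos h1, if_pos ⟨fun h => h2 h.symm, fun h => h3 h.symm⟩, if_pos h1,
      if_neg h2, if_neg h3, show d - 1 + 1 = d from by omega, hch1]
    field_simp <;> ring_nf
  · exact absurd (h2.trans h3.symm) h1
  · rw [if_neg h1, if_neg (fun h => h.1 h2.symm), if_neg h1, if_pos h2, if_neg h3,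
      show d - 0 + 0 = d from by omega, hch1]
    field_simp <;> ring_nf
  · rw [if_neg h1, if_neg (fun h => h.2 h3.symm), if_neg h1, if_neg h2, if_pos h3,
      show d - 0 + 0 = d from by omega, hch1]
    field_simp <;> ring_nf
  · rw [if_neg h1, if_pos ⟨fun h => h2 h.symm, fun h => h3 h.symm⟩, if_neg h1,
      if_neg h2, if_neg h3, show d - 0 + 1 = d + 1 from by omega, hch2]
    field_simp <;> ring_nf

/-- The quadratic form of `G_{e_k}^{(1)}`, with weight-1 strings identified with the
position of their single 1, for `β` satisfying the normalization condition. -/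
theorem quadratic_form_G_ek_1 (N d : ℕ) (hN : 1 ≤ N) (hd : 2 ≤ d) (β : Fin N → ℝ)
    (hnorm : (∑ n, β n) ^ 2 + ((d : ℝ) - 1) * ∑ n, (β n) ^ 2 = d) (k : Fin N) :
    ∑ n : Fin N, ∑ m : Fin N,
        β n * β m * gEnt d 1 (fun i => decide (i = k)) (fun i => decide (i = n))
          (fun i => decide (i = m))
      = ((d : ℝ) + (((d : ℝ) - 1) * β k + ∑ n, β n) ^ 2) / ((d : ℝ) * ((d : ℝ) + 1)) := by
  have hdR : (2:ℝ) ≤ (d:ℝ) := by exact_mod_cast hd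
  set s : ℝ := ∑ n, β n with hs
  set q : ℝ := ∑ n, (β n) ^ 2 with hq
  set c : ℝ := (d:ℝ) - 1 with hc
  have h1 : ∀ n m : Fin N,
      β n * β m * gEnt d 1 (fun i => decide (i = k)) (fun i => decide (i = n))
        (fun i => decide (i = m)) =
      (2 * (β n * β m) + (c * (if n = m then β n * β m else 0)
        + c * (if n = k then β n * β m else 0) + c * (if m = k then β n * β m else 0))
        + c ^ 2 * (if n = k then (if n = m then β n * β m else 0) else 0))
        / ((d:ℝ) * ((d:ℝ) + 1)) := by
    intro n m
    rw [gEnt_eq hd]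
    split_ifs <;> ring
  have S1 : ∑ n : Fin N, ∑ m : Fin N, (β n * β m) = s * s := by
    rw [hs, Finset.sum_mul_sum]
  have S2 : ∑ n : Fin N, ∑ m : Fin N, (if n = m then β n * β m else 0) = q := by
    simp [Finset.sum_ite_eq, hq, sq]
  have hin : ∀ n : Fin N, ∑ m : Fin N, (if n = k then β n * β m else 0)
      = if n = k then β n * s else 0 := by
    intro n
    split_ifs
    · rw [← Finset.mul_sum]
    · simp
  have S3 : ∑ n : Fin N, ∑ m : Fin N, (if n = k then β n * β m else 0) = β k * s := by
    simp [hin, Finset.sum_ite_eq']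
  have S4 : ∑ n : Fin N, ∑ m : Fin N, (if m = k then β n * β m else 0) = s * β k := by
    simp only [Finset.sum_ite_eq', Finset.mem_univ, if_true]
    rw [← Finset.sum_mul]
  have hin2 : ∀ n : Fin N, ∑ m : Fin N, (if n = k then (if n = m then β n * β m else 0) else 0)
      = if n = k then β n * β n else 0 := by
    intro n
    split_ifs
    · simp [Finset.sum_ite_eq]
    · simp
  have S5 : ∑ n : Fin N, ∑ m : Fin N,
      (if n = k then (if n = m then β n * β m else 0) else 0) = β k * β k := by
    simp [hin2, Finset.sum_ite_eq']
  calc ∑ n : Fin N, ∑ m : Fin N,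
        β n * β m * gEnt d 1 (fun i => decide (i = k)) (fun i => decide (i = n))
          (fun i => decide (i = m))
      = ∑ n : Fin N, ∑ m : Fin N,
        (2 * (β n * β m) + (c * (if n = m then β n * β m else 0)
          + c * (if n = k then β n * β m else 0) + c * (if m = k then β n * β m else 0))
          + c ^ 2 * (if n = k then (if n = m then β n * β m else 0) else 0))
          / ((d:ℝ) * ((d:ℝ) + 1)) := by
        exact Finset.sum_congr rfl fun n _ => Finset.sum_congr rfl fun m _ => h1 n m
    _ = (2 * (s * s) + (c * q + c * (β k * s) + c * (s * β k)) + c ^ 2 * (β k * β k))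
          / ((d:ℝ) * ((d:ℝ) + 1)) := by
        simp only [← Finset.sum_div, Finset.sum_add_distrib, ← Finset.mul_sum, S1, S2, S3, S4, S5]
        rw [← Finset.sum_mul, ← hs]
    _ = ((d : ℝ) + (c * β k + s) ^ 2) / ((d : ℝ) * ((d : ℝ) + 1)) := by
        congr 1
        rw [hc]
        linear_combination hnorm
end

section
/- Let d ≥ 2 and M ≥ 1 be integers, and let L, N be integers with 2M < L < N − 2M. Let v be a real vector indexed by the bit strings y ∈ {0,1}^N of Hamming weight L, and suppose that for every bit string x ∈ {0,1}^N of Hamming weight 2M, Σ_{y : x·y = 2M} v_y = 0. Then Σ_{y : |y| = L} v_y · G_y^{(M)} = 0 (the zero matrix). -/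
/-- The bit strings of length `N` and Hamming weight `M`. -/
abbrev WtStr (N M : ℕ) := {x : Fin N → Bool // wt x = M}

/-- The matrix `G_y^{(M)}`, indexed by the weight-`M` bit strings of length `N`. -/
noncomputable def gMatM (d M : ℕ) {N : ℕ} (y : Fin N → Bool) :
    Matrix (WtStr N M) (WtStr N M) ℝ :=
  Matrix.of fun x z => gEnt d M y x.1 z.1

namespace KRGaux

/-- Support of a bit string as a finset. -/
def suppF {N : ℕ} (y : Fin N → Bool) : Finset (Fin N) :=
  Finset.univ.filter (fun i => y i = true)

lemma wt_eq_card {N : ℕ} (y : Fin N → Bool) : wt y = (suppF y).card := rfl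

lemma dotB_eq_card {N : ℕ} (x y : Fin N → Bool) :
    dotB x y = (suppF x ∩ suppF y).card := by
  unfold dotB suppF
  rw [← Finset.filter_and]

/-- Sums of `v` over weight-`L` supersets of any set of size ≤ 2M vanish. -/
lemma sum_superset_zero {N : ℕ} (M L : ℕ) (hL : 2 * M < L)
    (v : (Fin N → Bool) → ℝ)
    (hker : ∀ x : Fin N → Bool, wt x = 2 * M →
      ∑ y ∈ Finset.univ.filter (fun y : Fin N → Bool => wt y = L ∧ dotB x y = 2 * M), v y = 0)
    (A : Finset (Fin N)) (hA : A.card ≤ 2 * M) :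
    ∑ y ∈ Finset.univ.filter (fun y : Fin N → Bool => wt y = L ∧ A ⊆ suppF y), v y = 0 := by
  obtain ⟨n, hn⟩ : ∃ n, 2 * M - A.card = n := ⟨_, rfl⟩
  induction n generalizing A with
  | zero =>
    have hAcard : A.card = 2 * M := by omega
    set x : Fin N → Bool := fun i => decide (i ∈ A) with hx
    have hsupp : suppF x = A := by
      ext i; simp [suppF, hx]
    have hwt : wt x = 2 * M := by
      rw [wt_eq_card, hsupp, hAcard]
    have := hker x hwt
    rw [← this]
    apply Finset.sum_congr
    · apply Finset.filter_congr
      intro y _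
      constructor
      · rintro ⟨h1, h2⟩
        refine ⟨h1, ?_⟩
        rw [dotB_eq_card, hsupp]
        rw [Finset.inter_eq_left.mpr h2, hAcard]
      · rintro ⟨h1, h2⟩
        refine ⟨h1, ?_⟩
        rw [dotB_eq_card, hsupp] at h2
        have hsub : A ∩ suppF y ⊆ A := Finset.inter_subset_left
        have : A ∩ suppF y = A :=
          Finset.eq_of_subset_of_card_le hsub (by omega)
        exact Finset.inter_eq_left.mp this
    · intro y _; rfl
  | succ n ih =>
    have hAlt : A.card < 2 * M := by omega
    have key : ∀ i ∈ Aᶜ,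
        ∑ y ∈ Finset.univ.filter (fun y : Fin N → Bool => wt y = L ∧ insert i A ⊆ suppF y),
          v y = 0 := by
      intro i hi
      have hiA : i ∉ A := Finset.mem_compl.mp hi
      have hcard : (insert i A).card = A.card + 1 := Finset.card_insert_of_notMem hiA
      exact ih (insert i A) (by omega) (by omega)
    have h0 : (0 : ℝ) = ∑ i ∈ Aᶜ,
        ∑ y ∈ Finset.univ.filter (fun y : Fin N → Bool => wt y = L ∧ insert i A ⊆ suppF y),
          v y := by
      rw [Finset.sum_congr rfl key]; simp
    have hstep : ∀ i ∈ Aᶜ,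
        ∑ y ∈ Finset.univ.filter (fun y : Fin N → Bool => wt y = L ∧ insert i A ⊆ suppF y), v y
        = ∑ y ∈ Finset.univ.filter (fun y : Fin N → Bool => wt y = L ∧ A ⊆ suppF y),
            (if i ∈ suppF y then v y else 0) := by
      intro i hi
      rw [← Finset.sum_filter]
      apply Finset.sum_congr
      · rw [Finset.filter_filter]
        apply Finset.filter_congr
        intro y _
        rw [Finset.insert_subset_iff]
        tauto
      · intro y _; rfl
    rw [Finset.sum_congr rfl hstep] at h0
    rw [Finset.sum_comm] at h0
    have hcount : ∀ y ∈ Finset.univ.filter (fun y : Fin N → Bool => wt y = L ∧ A ⊆ suppF y),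
        ∑ i ∈ Aᶜ, (if i ∈ suppF y then v y else 0) = ((L - A.card : ℕ) : ℝ) * v y := by
      intro y hy
      rw [Finset.mem_filter] at hy
      obtain ⟨-, hwt, hA'⟩ := hy
      rw [Finset.sum_ite, Finset.sum_const, Finset.sum_const_zero, add_zero, nsmul_eq_mul]
      congr 1
      have hfe : Aᶜ.filter (fun i => i ∈ suppF y) = suppF y \ A := by
        ext i; simp [Finset.mem_sdiff, and_comm]
      rw [hfe, Finset.card_sdiff_of_subset hA', wt_eq_card] at *
      rw [hwt]
    rw [Finset.sum_congr rfl hcount, ← Finset.mul_sum] at h0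
    have hne : ((L - A.card : ℕ) : ℝ) ≠ 0 := by
      have : 0 < L - A.card := by omega
      positivity
    exact (mul_eq_zero.mp h0.symm).resolve_left hne

/-- Weighted sums by any function of `|supp y ∩ S|`, restricted to supersets of `A`, vanish. -/
lemma sum_fun_inter_zero {N : ℕ} (M L : ℕ) (hL : 2 * M < L)
    (v : (Fin N → Bool) → ℝ)
    (hker : ∀ x : Fin N → Bool, wt x = 2 * M →
      ∑ y ∈ Finset.univ.filter (fun y : Fin N → Bool => wt y = L ∧ dotB x y = 2 * M), v y = 0)
    (S A : Finset (Fin N)) (f : ℕ → ℝ)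
    (hdisj : Disjoint A S) (hcard : A.card + S.card ≤ 2 * M) :
    ∑ y ∈ Finset.univ.filter (fun y : Fin N → Bool => wt y = L ∧ A ⊆ suppF y),
      v y * f ((suppF y ∩ S).card) = 0 := by
  revert hdisj hcard
  induction S using Finset.induction_on generalizing A f with
  | empty =>
    intro hdisj hcard
    simp only [Finset.inter_empty, Finset.card_empty]
    rw [← Finset.sum_mul, sum_superset_zero M L hL v hker A (by omega), zero_mul]
  | @insert i S' hi ihS =>
    intro hdisj hcard
    rw [Finset.disjoint_insert_right] at hdisj
    obtain ⟨hiA, hdisj'⟩ := hdisj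
    have hcard' : (insert i S').card = S'.card + 1 := Finset.card_insert_of_notMem hi
    have hsplit : ∀ y : Fin N → Bool,
        v y * f ((suppF y ∩ insert i S').card)
        = v y * f ((suppF y ∩ S').card)
          + (if i ∈ suppF y then
              v y * ((fun j => f (j + 1) - f j) ((suppF y ∩ S').card)) else 0) := by
      intro y
      by_cases hiy : i ∈ suppF y
      · have : suppF y ∩ insert i S' = insert i (suppF y ∩ S') := by
          ext j
          simp only [Finset.mem_inter, Finset.mem_insert]
          constructor
          · rintro ⟨h1, h2 | h2⟩
            · left; exact h2
            · right; exact ⟨h1, h2⟩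
          · rintro (rfl | ⟨h1, h2⟩)
            · exact ⟨hiy, Or.inl rfl⟩
            · exact ⟨h1, Or.inr h2⟩
        rw [this, Finset.card_insert_of_notMem (by simp [hi]), if_pos hiy]
        ring
      · have : suppF y ∩ insert i S' = suppF y ∩ S' := by
          ext j
          simp only [Finset.mem_inter, Finset.mem_insert]
          constructor
          · rintro ⟨h1, h2 | h2⟩
            · exact absurd (h2 ▸ h1) hiy
            · exact ⟨h1, h2⟩
          · rintro ⟨h1, h2⟩; exact ⟨h1, Or.inr h2⟩
        rw [this, if_neg hiy]
        ring
    rw [Finset.sum_congr rfl (fun y _ => hsplit y), Finset.sum_add_distrib]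
    have h1 : ∑ y ∈ Finset.univ.filter (fun y : Fin N → Bool => wt y = L ∧ A ⊆ suppF y),
        v y * f ((suppF y ∩ S').card) = 0 := ihS A f hdisj' (by omega)
    have h2 : ∑ y ∈ Finset.univ.filter (fun y : Fin N → Bool => wt y = L ∧ A ⊆ suppF y),
        (if i ∈ suppF y then
          v y * ((fun j => f (j + 1) - f j) ((suppF y ∩ S').card)) else 0) = 0 := by
      rw [← Finset.sum_filter, Finset.filter_filter]
      have hfe : Finset.univ.filter (fun y : Fin N → Bool => (wt y = L ∧ A ⊆ suppF y) ∧ i ∈ suppF y)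
          = Finset.univ.filter (fun y : Fin N → Bool => wt y = L ∧ insert i A ⊆ suppF y) := by
        apply Finset.filter_congr
        intro y _
        rw [Finset.insert_subset_iff]
        tauto
      rw [hfe]
      exact ihS (insert i A) (fun j => f (j + 1) - f j)
        (Finset.disjoint_insert_left.mpr ⟨hi, hdisj'⟩)
        (by rw [Finset.card_insert_of_notMem hiA]; omega)
    rw [h1, h2, add_zero]

end KRGaux

/-- For `2M < L < N − 2M`, any vector `v` on the weight-`L` strings in the kernel of the
intersection matrix `X` (rows indexed by weight-`2M` strings, entry 1 iff `x·y = 2M`)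
satisfies `Σ_y v_y G_y^{(M)} = 0`. -/
theorem kernel_relation_general_M (N d M L : ℕ) (hd : 2 ≤ d) (hM : 1 ≤ M)
    (hL : 2 * M < L) (hLN : L + 2 * M < N)
    (v : (Fin N → Bool) → ℝ)
    (hker : ∀ x : Fin N → Bool, wt x = 2 * M →
      ∑ y ∈ Finset.univ.filter (fun y : Fin N → Bool => wt y = L ∧ dotB x y = 2 * M), v y = 0) :
    ∑ y ∈ Finset.univ.filter (fun y : Fin N → Bool => wt y = L), v y • gMatM d M y = 0 := by
  open KRGaux in
  apply Matrix.ext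
  intro x z
  rw [Matrix.sum_apply, Matrix.zero_apply]
  set S := suppF x.1 ∪ suppF z.1 with hS
  set f : ℕ → ℝ :=
    fun j => 1 / (Nat.choose (M + d - 1 - dotB x.1 z.1 + (L - j)) (d - 1) : ℝ) with hf
  have hterm : ∀ y ∈ Finset.univ.filter (fun y : Fin N → Bool => wt y = L),
      (v y • gMatM d M y) x z = v y * f ((suppF y ∩ S).card) := by
    intro y hy
    rw [Finset.mem_filter] at hy
    have hwt : wt y = L := hy.2
    have hsupp : suppF (fun i => (!x.1 i && !z.1 i && y i)) = suppF y \ S := by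
      ext i
      simp only [suppF, hS, Finset.mem_filter, Finset.mem_univ, true_and,
        Finset.mem_sdiff, Finset.mem_union]
      cases hx1 : x.1 i <;> cases hz1 : z.1 i <;> cases hy1 : y i <;> simp
    have hcardeq : wt (fun i => (!x.1 i && !z.1 i && y i)) = L - (suppF y ∩ S).card := by
      rw [wt_eq_card, hsupp]
      have := Finset.card_inter_add_card_sdiff (suppF y) S
      have h2 : (suppF y).card = L := by rw [← wt_eq_card, hwt]
      omega
    rw [Matrix.smul_apply, smul_eq_mul]
    congr 1
    show gEnt d M y x.1 z.1 = f ((suppF y ∩ S).card)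
    rw [gEnt, hcardeq, hf]
  rw [Finset.sum_congr rfl hterm]
  have hSle : S.card ≤ 2 * M := by
    calc S.card ≤ (suppF x.1).card + (suppF z.1).card := Finset.card_union_le _ _
    _ = 2 * M := by rw [← wt_eq_card, ← wt_eq_card, x.2, z.2]; ring
  have hfilter : Finset.univ.filter (fun y : Fin N → Bool => wt y = L)
      = Finset.univ.filter
          (fun y : Fin N → Bool => wt y = L ∧ (∅ : Finset (Fin N)) ⊆ suppF y) := by
    simp
  rw [hfilter]
  exact KRGaux.sum_fun_inter_zero M L hL v hker S ∅ f (Finset.disjoint_empty_left S)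
    (by simpa using hSle)
end

section
/- Let N and M be integers with 0 ≤ M < N. Let f : {0, …, M} → ℝ and F : {0, …, M+1} → ℝ, and define the real matrix G^{(M)}, indexed by bit strings of length N and Hamming weight M, with entries G^{(M)}_{x,z} = f(x·z), and the matrix G^{(M+1)}, indexed by weight-(M+1) strings, with entries G^{(M+1)}_{x,z} = F(x·z), where x·z is the number of common 1 positions. Suppose there is λ̃ ∈ ℝ such that for every k = 0, …, M, (M+1−k)·F(k+1) + (N−2M−1+k)·F(k) = λ̃·((M+1−k)·f(k) + k·f(k−1)) (the term k·f(k−1) being 0 when k = 0). If v is a real vector indexed by weight-M strings with G^{(M)} v = λ v, then the vector v' indexed by weight-(M+1) strings defined by v'_x = Σ_{y : |y| = M, y·x = M} v_y satisfies G^{(M+1)} v' = λ·λ̃·v'. -/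
open Finset

def ones {N : ℕ} (x : Fin N → Bool) : Finset (Fin N) := univ.filter (fun i => x i = true)

lemma mem_ones {N : ℕ} {x : Fin N → Bool} {i : Fin N} : i ∈ ones x ↔ x i = true := by
  simp [ones]

lemma wt_eq_s17 {N : ℕ} (x : Fin N → Bool) : wt x = (ones x).card := rfl

lemma dotB_eq_s17 {N : ℕ} (x z : Fin N → Bool) : dotB x z = (ones x ∩ ones z).card := by
  unfold dotB ones; congr 1; ext i; simp

lemma ones_inj {N : ℕ} {x y : Fin N → Bool} (h : ones x = ones y) : x = y := by
  funext i
  have := Finset.ext_iff.mp h i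
  simp [mem_ones] at this
  cases hx : x i <;> cases hy : y i <;> simp_all

lemma ones_update_false {N : ℕ} (x : Fin N → Bool) (i : Fin N) :
    ones (Function.update x i false) = (ones x).erase i := by
  ext j
  rcases eq_or_ne j i with h | h <;> simp [mem_ones, Function.update, h]

lemma ones_update_true {N : ℕ} (x : Fin N → Bool) (i : Fin N) :
    ones (Function.update x i true) = insert i (ones x) := by
  ext j
  rcases eq_or_ne j i with h | h <;> simp [mem_ones, Function.update, h]

lemma inter_card_eq_iff {N M : ℕ} (x y : Fin N → Bool) (hy : (ones y).card = M) :
    (ones y ∩ ones x).card = M ↔ ones y ⊆ ones x := by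
  constructor
  · intro h
    have h2 : ones y ∩ ones x = ones y :=
      Finset.eq_of_subset_of_card_le (Finset.inter_subset_left) (by omega)
    exact h2 ▸ Finset.inter_subset_right
  · intro h
    rw [Finset.inter_eq_left.mpr h, hy]

lemma insert_extract {N : ℕ} (s t : Finset (Fin N)) (hst : s ⊆ t) (hc : t.card = s.card + 1) :
    ∃ a ∉ s, t = insert a s := by
  have h1 : (t \ s).card = 1 := by rw [Finset.card_sdiff_of_subset hst]; omega
  obtain ⟨a, ha⟩ := Finset.card_eq_one.mp h1
  refine ⟨a, ?_, ?_⟩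
  · have : a ∈ t \ s := ha ▸ Finset.mem_singleton_self a
    exact (Finset.mem_sdiff.mp this).2
  · have h2 := Finset.sdiff_union_of_subset hst
    rw [ha] at h2
    rw [← h2]; ext j; simp [or_comm]

lemma dotB_le {N M : ℕ} (x : Fin N → Bool) (w : WtStr N M) : dotB x w.1 ≤ M := by
  have h : (ones w.1).card = M := by rw [← wt_eq_s17]; exact w.2
  rw [dotB_eq_s17]
  exact le_of_le_of_eq (Finset.card_le_card Finset.inter_subset_right) h

lemma dotB_lb {N M : ℕ} (x : WtStr N (M+1)) (w : WtStr N M) :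
    2*M + 1 ≤ N + dotB x.1 w.1 := by
  have h1 := Finset.card_inter_add_card_union (ones x.1) (ones w.1)
  have h2 : (ones x.1 ∪ ones w.1).card ≤ N := by
    have := Finset.card_le_univ (ones x.1 ∪ ones w.1)
    simpa using this
  have hx := x.2; have hw := w.2
  rw [wt_eq_s17] at hx hw
  rw [dotB_eq_s17]
  omega

lemma sumB {N M : ℕ} (f : ℕ → ℝ) (x : WtStr N (M+1)) (w : WtStr N M) :
    ∑ y ∈ Finset.univ.filter (fun y : WtStr N M => dotB y.1 x.1 = M), f (dotB y.1 w.1)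
      = (dotB x.1 w.1 : ℝ) * f (dotB x.1 w.1 - 1)
        + ((M + 1 - dotB x.1 w.1 : ℕ) : ℝ) * f (dotB x.1 w.1) := by
  set k := dotB x.1 w.1 with hk
  have hxcard : (ones x.1).card = M + 1 := by rw [← wt_eq_s17]; exact x.2
  -- membership lemma for the image
  have hmem : ∀ a ∈ ones x.1, wt (Function.update x.1 a false) = M := by
    intro a ha
    rw [wt_eq_s17, ones_update_false, Finset.card_erase_of_mem ha, hxcard]
    omega
  have key : ∑ a ∈ ones x.1, f (dotB (Function.update x.1 a false) w.1)
      = ∑ y ∈ Finset.univ.filter (fun y : WtStr N M => dotB y.1 x.1 = M), f (dotB y.1 w.1) := by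
    apply Finset.sum_bij (i := fun a ha => (⟨Function.update x.1 a false, hmem a ha⟩ : WtStr N M))
    · intro a ha
      simp only [Finset.mem_filter, Finset.mem_univ, true_and]
      rw [dotB_eq_s17, ones_update_false,
        Finset.inter_eq_left.mpr (Finset.erase_subset a (ones x.1)),
        Finset.card_erase_of_mem ha, hxcard]
      omega
    · intro a ha b hb h
      have h2 : Function.update x.1 a false = Function.update x.1 b false := congrArg Subtype.val h
      by_contra hne
      have := congrFun h2 a
      rw [Function.update_self, Function.update_of_ne hne] at this
      rw [mem_ones] at ha
      exact absurd ha.symm (by rw [← this]; simp)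
    · intro y hy
      simp only [Finset.mem_filter, Finset.mem_univ, true_and] at hy
      rw [dotB_eq_s17] at hy
      have hycard : (ones y.1).card = M := by rw [← wt_eq_s17]; exact y.2
      have hsub : ones y.1 ⊆ ones x.1 := (inter_card_eq_iff _ _ hycard).mp hy
      obtain ⟨a, hna, hins⟩ := insert_extract _ _ hsub (by omega)
      have hax : a ∈ ones x.1 := by rw [hins]; exact Finset.mem_insert_self a _
      refine ⟨a, hax, ?_⟩
      apply Subtype.ext
      apply ones_inj
      rw [ones_update_false, hins, Finset.erase_insert hna]
    · intro a ha; rfl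
  rw [← key]
  have step : ∀ a ∈ ones x.1, f (dotB (Function.update x.1 a false) w.1)
      = if w.1 a = true then f (k - 1) else f k := by
    intro a ha
    rw [dotB_eq_s17, ones_update_false]
    have herase : (ones x.1).erase a ∩ ones w.1 = (ones x.1 ∩ ones w.1).erase a := by
      ext j; simp only [Finset.mem_inter, Finset.mem_erase]; tauto
    rw [herase]
    by_cases hw : w.1 a = true
    · have hmem2 : a ∈ ones x.1 ∩ ones w.1 := Finset.mem_inter.mpr ⟨ha, mem_ones.mpr hw⟩
      rw [Finset.card_erase_of_mem hmem2, if_pos hw, hk, dotB_eq_s17]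
    · have hmem2 : a ∉ ones x.1 ∩ ones w.1 := by
        simp only [Finset.mem_inter, mem_ones]; tauto
      rw [Finset.erase_eq_of_notMem hmem2, if_neg hw, hk, dotB_eq_s17]
  rw [Finset.sum_congr rfl step, Finset.sum_ite, Finset.sum_const, Finset.sum_const]
  have hc1 : ((ones x.1).filter (fun a => w.1 a = true)).card = k := by
    rw [hk, dotB_eq_s17]; congr 1; ext j; simp [mem_ones]
  have hc2 : ((ones x.1).filter (fun a => ¬ w.1 a = true)).card = M + 1 - k := by
    have := Finset.card_filter_add_card_filter_not
      (s := ones x.1) (p := fun a => w.1 a = true)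
    omega
  rw [hc1, hc2]
  ring

lemma sumA {N M : ℕ} (F : ℕ → ℝ) (x : WtStr N (M+1)) (w : WtStr N M) :
    ∑ z ∈ Finset.univ.filter (fun z : WtStr N (M+1) => dotB w.1 z.1 = M), F (dotB x.1 z.1)
      = ((M + 1 - dotB x.1 w.1 : ℕ) : ℝ) * F (dotB x.1 w.1 + 1)
        + ((N - (2*M + 1 - dotB x.1 w.1) : ℕ) : ℝ) * F (dotB x.1 w.1) := by
  set k := dotB x.1 w.1 with hk
  have hwcard : (ones w.1).card = M := by rw [← wt_eq_s17]; exact w.2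
  have hxcard : (ones x.1).card = M + 1 := by rw [← wt_eq_s17]; exact x.2
  have hmem : ∀ a ∈ Finset.univ.filter (fun j => w.1 j = false),
      wt (Function.update w.1 a true) = M + 1 := by
    intro a ha
    simp only [Finset.mem_filter, Finset.mem_univ, true_and] at ha
    have hna : a ∉ ones w.1 := by simp [mem_ones, ha]
    rw [wt_eq_s17, ones_update_true, Finset.card_insert_of_notMem hna, hwcard]
  have key : ∑ a ∈ Finset.univ.filter (fun j => w.1 j = false),
        F (dotB x.1 (Function.update w.1 a true))
      = ∑ z ∈ Finset.univ.filter (fun z : WtStr N (M+1) => dotB w.1 z.1 = M), F (dotB x.1 z.1) := by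
    apply Finset.sum_bij (i := fun a ha =>
      (⟨Function.update w.1 a true, hmem a ha⟩ : WtStr N (M+1)))
    · intro a ha
      simp only [Finset.mem_filter, Finset.mem_univ, true_and] at ha ⊢
      rw [dotB_eq_s17, ones_update_true, Finset.inter_eq_left.mpr (Finset.subset_insert a _), hwcard]
    · intro a ha b hb h
      simp only [Finset.mem_filter, Finset.mem_univ, true_and] at ha hb
      have h2 : Function.update w.1 a true = Function.update w.1 b true := congrArg Subtype.val h
      by_contra hne
      have := congrFun h2 a
      rw [Function.update_self, Function.update_of_ne hne] at this
      rw [ha] at this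
      exact Bool.true_eq_false.mp this
    · intro z hz
      simp only [Finset.mem_filter, Finset.mem_univ, true_and] at hz
      rw [dotB_eq_s17] at hz
      have hsub : ones w.1 ⊆ ones z.1 := (inter_card_eq_iff _ _ hwcard).mp hz
      have hzcard : (ones z.1).card = M + 1 := by rw [← wt_eq_s17]; exact z.2
      obtain ⟨a, hna, hins⟩ := insert_extract _ _ hsub (by omega)
      refine ⟨a, by simpa [mem_ones] using hna, ?_⟩
      apply Subtype.ext
      apply ones_inj
      rw [ones_update_true, hins]
    · intro a ha; rfl
  rw [← key]
  have step : ∀ a ∈ Finset.univ.filter (fun j => w.1 j = false),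
      F (dotB x.1 (Function.update w.1 a true)) = if x.1 a = true then F (k + 1) else F k := by
    intro a ha
    simp only [Finset.mem_filter, Finset.mem_univ, true_and] at ha
    have hna : a ∉ ones x.1 ∩ ones w.1 := by simp [mem_ones, ha]
    rw [dotB_eq_s17, ones_update_true]
    by_cases hx : x.1 a = true
    · have : ones x.1 ∩ insert a (ones w.1) = insert a (ones x.1 ∩ ones w.1) := by
        ext j; rcases eq_or_ne j a with h | h <;> simp [Finset.mem_inter, mem_ones, h, hx]
      rw [this, Finset.card_insert_of_notMem hna, if_pos hx, hk, dotB_eq_s17]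
    · have : ones x.1 ∩ insert a (ones w.1) = ones x.1 ∩ ones w.1 := by
        ext j; rcases eq_or_ne j a with h | h <;> simp [Finset.mem_inter, mem_ones, h, hx]
      rw [this, if_neg hx, hk, dotB_eq_s17]
  rw [Finset.sum_congr rfl step, Finset.sum_ite, Finset.sum_const, Finset.sum_const]
  have hkM : k ≤ M := dotB_le x.1 w
  have hsplit1 : ((Finset.univ.filter (fun j => w.1 j = false)).filter
      (fun a => x.1 a = true)).card = M + 1 - k := by
    have heq : (Finset.univ.filter (fun j => w.1 j = false)).filter (fun a => x.1 a = true)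
        = ones x.1 \ ones w.1 := by
      ext j; simp [mem_ones, Finset.mem_sdiff, and_comm]
    rw [heq]
    have := Finset.card_sdiff_add_card_inter (ones x.1) (ones w.1)
    have hkk : k = (ones x.1 ∩ ones w.1).card := by rw [hk, dotB_eq_s17]
    omega
  have hsplit2 : ((Finset.univ.filter (fun j => w.1 j = false)).filter
      (fun a => ¬ x.1 a = true)).card = N - (2*M + 1 - k) := by
    have heq : (Finset.univ.filter (fun j => w.1 j = false)).filter (fun a => ¬ x.1 a = true)
        = (ones x.1 ∪ ones w.1)ᶜ := by
      ext j
      simp only [Finset.mem_filter, Finset.mem_univ, true_and, Finset.mem_compl,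
        Finset.mem_union, mem_ones, not_or, Bool.not_eq_true]
      tauto
    have hu := Finset.card_inter_add_card_union (ones x.1) (ones w.1)
    have hkk : k = (ones x.1 ∩ ones w.1).card := by rw [hk, dotB_eq_s17]
    have hcu : (ones x.1 ∪ ones w.1).card = 2*M + 1 - k := by omega
    rw [heq, Finset.card_compl, Fintype.card_fin, hcu]
  rw [hsplit1, hsplit2]
  ring

/-- Eigenvector lifting: if the recursion `(M+1−k)F(k+1) + (N−2M−1+k)F(k)
= λ̃((M+1−k)f(k) + k f(k−1))` holds for all `0 ≤ k ≤ M`, then any eigenvector `v` of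
`G^{(M)} = (f(x·z))` with eigenvalue `λ` lifts to the eigenvector
`v'_x = Σ_{y : |y|=M, y·x=M} v_y` of `G^{(M+1)} = (F(x·z))` with eigenvalue `λλ̃`. -/
theorem eigenvector_lifting (N M : ℕ) (hMN : M < N) (f F : ℕ → ℝ) (lamt : ℝ)
    (hrec : ∀ k : ℕ, k ≤ M →
      ((M : ℝ) + 1 - k) * F (k + 1) + ((N : ℝ) - 2 * M - 1 + k) * F k
        = lamt * (((M : ℝ) + 1 - k) * f k + (k : ℝ) * f (k - 1)))
    (lam : ℝ) (v : WtStr N M → ℝ)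
    (hv : Matrix.mulVec (Matrix.of fun x z : WtStr N M => f (dotB x.1 z.1)) v = lam • v) :
    Matrix.mulVec (Matrix.of fun x z : WtStr N (M + 1) => F (dotB x.1 z.1))
        (fun x : WtStr N (M + 1) =>
          ∑ y ∈ Finset.univ.filter (fun y : WtStr N M => dotB y.1 x.1 = M), v y)
      = (lam * lamt) • fun x : WtStr N (M + 1) =>
          ∑ y ∈ Finset.univ.filter (fun y : WtStr N M => dotB y.1 x.1 = M), v y := by
  have hv' : ∀ y : WtStr N M, ∑ w : WtStr N M, f (dotB y.1 w.1) * v w = lam * v y := by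
    intro y
    have h := congrFun hv y
    simpa [Matrix.mulVec, dotProduct] using h
  funext x
  simp only [Matrix.mulVec, dotProduct, Matrix.of_apply, Pi.smul_apply, smul_eq_mul]
  calc
    ∑ z : WtStr N (M+1), F (dotB x.1 z.1)
        * ∑ w ∈ Finset.univ.filter (fun w : WtStr N M => dotB w.1 z.1 = M), v w
      = ∑ z : WtStr N (M+1), ∑ w : WtStr N M,
          if dotB w.1 z.1 = M then F (dotB x.1 z.1) * v w else 0 := by
        refine Finset.sum_congr rfl fun z _ => ?_
        rw [Finset.sum_filter, Finset.mul_sum]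
        simp [mul_ite]
    _ = ∑ w : WtStr N M, ∑ z : WtStr N (M+1),
          if dotB w.1 z.1 = M then F (dotB x.1 z.1) * v w else 0 := Finset.sum_comm
    _ = ∑ w : WtStr N M,
          (∑ z ∈ Finset.univ.filter (fun z : WtStr N (M+1) => dotB w.1 z.1 = M),
            F (dotB x.1 z.1)) * v w := by
        refine Finset.sum_congr rfl fun w _ => ?_
        rw [Finset.sum_mul, Finset.sum_filter]
    _ = ∑ w : WtStr N M,
          (lamt * ∑ y ∈ Finset.univ.filter (fun y : WtStr N M => dotB y.1 x.1 = M),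
            f (dotB y.1 w.1)) * v w := by
        refine Finset.sum_congr rfl fun w _ => ?_
        congr 1
        rw [sumA F x w, sumB f x w]
        set k := dotB x.1 w.1 with hk
        have hkM : k ≤ M := dotB_le x.1 w
        have hlb : 2*M + 1 ≤ N + k := dotB_lb x w
        have c1 : ((M + 1 - k : ℕ) : ℝ) = (M : ℝ) + 1 - k := by
          rw [Nat.cast_sub (by omega)]; push_cast; ring
        have c2 : ((N - (2*M + 1 - k) : ℕ) : ℝ) = (N : ℝ) - 2*M - 1 + k := by
          rw [Nat.cast_sub (by omega), Nat.cast_sub (by omega)]; push_cast; ring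
        rw [c1, c2]
        have e := hrec k hkM
        linarith [e]
    _ = lamt * ∑ y ∈ Finset.univ.filter (fun y : WtStr N M => dotB y.1 x.1 = M),
          ∑ w : WtStr N M, f (dotB y.1 w.1) * v w := by
        have h1 : ∀ w : WtStr N M,
            (lamt * ∑ y ∈ Finset.univ.filter (fun y : WtStr N M => dotB y.1 x.1 = M),
              f (dotB y.1 w.1)) * v w
            = lamt * ∑ y ∈ Finset.univ.filter (fun y : WtStr N M => dotB y.1 x.1 = M),
              f (dotB y.1 w.1) * v w := by
          intro w; rw [mul_assoc, Finset.sum_mul]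
        rw [Finset.sum_congr rfl fun w _ => h1 w, ← Finset.mul_sum]
        congr 1
        exact Finset.sum_comm
    _ = (lam * lamt)
        * ∑ y ∈ Finset.univ.filter (fun y : WtStr N M => dotB y.1 x.1 = M), v y := by
        rw [Finset.sum_congr rfl fun y _ => hv' y, ← Finset.mul_sum]
        ring
end
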